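/- arXiv:2007.14654 — 3 statements merged into one kernel-verified Lean document; each statement's English description precedes it below -/
import Mathlib

section
/- Let D^t ⊆ ℝ^n be open and let D^z ⊆ ℝ^s be open and symmetric (i.e., z ∈ D^z implies Σz ∈ D^z for every diagonal matrix Σ with diagonal entries in {−1,0,1}). Let cE : D^t × D^z → ℝ^{m₁}, cI : D^t × D^z → ℝ^{m₂}, cZ : D^t × D^z → ℝ^s be continuous. Define F_eabs = {(t,w,zᵗ,z^w) ∈ D^t × ℝ^{m₂} × D^z × ℝ^{m₂} : cE(t,|zᵗ|) = 0, cI(t,|zᵗ|) − |z^w| = 0, cZ(t,|zᵗ|) − zᵗ = 0, w − z^w = 0} and F_empcc = {(t,w,uᵗ,vᵗ,u^w,v^w) : t ∈ D^t, w ∈ ℝ^{m₂}, uᵗ+vᵗ ∈ D^z, uᵗ,vᵗ ≥ 0, uᵗᵢvᵗᵢ = 0 for all i, u^w,v^w ≥ 0, u^wᵢv^wᵢ = 0 for all i, cE(t,uᵗ+vᵗ) = 0, cI(t,uᵗ+vᵗ) − (u^w+v^w) = 0, cZ(t,uᵗ+vᵗ) − (uᵗ−vᵗ) = 0, w − (u^w−v^w)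 = 0}. Then the map φ̄(t,w,uᵗ,vᵗ,u^w,v^w) = (t, w, uᵗ−vᵗ, u^w−v^w) is a homeomorphism from F_empcc onto F_eabs with inverse φ̄⁻¹(t,w,zᵗ,z^w) = (t, w, [zᵗ]⁺, [zᵗ]⁻, [z^w]⁺, [z^w]⁻). -/
/-!
The two feasible sets are related by splitting `z` into `z⁺` and `z⁻` and conversely by
`(u, v) ↦ u - v`. On a complementarity pair `u, v ≥ 0`, `u * v = 0` one has `(u - v)⁺ = u`,
`(u - v)⁻ = v` and `|u - v| = u + v`, while `z⁺ - z⁻ = z` and `z⁺ + z⁻ = |z|` always; these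
identities carry the constraints across. The domain conditions `u + v ∈ D^z` and `z ∈ D^z`
match because `|z|` and `z` are obtained from each other by a sign matrix. Both maps are
continuous, hence restrict to mutually inverse homeomorphisms.
-/

/-- componentwise positive part -/
def posPart' {s : ℕ} (z : Fin s → ℝ) : Fin s → ℝ := fun i => max (z i) 0

/-- componentwise negative part -/
def negPart' {s : ℕ} (z : Fin s → ℝ) : Fin s → ℝ := fun i => max (-z i) 0

/-- componentwise absolute value -/
def vabs {s : ℕ} (z : Fin s → ℝ) : Fin s → ℝ := fun i => |z i|

/-- Feasible set of the abs-normal NLP with inequality slacks: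
points `(t, w, zᵗ, z^w)`. -/
def Feabs {n s m₁ m₂ : ℕ} (Dt : Set (Fin n → ℝ)) (Dz : Set (Fin s → ℝ))
    (cE : (Fin n → ℝ) × (Fin s → ℝ) → Fin m₁ → ℝ)
    (cI : (Fin n → ℝ) × (Fin s → ℝ) → Fin m₂ → ℝ)
    (cZ : (Fin n → ℝ) × (Fin s → ℝ) → Fin s → ℝ) :
    Set ((Fin n → ℝ) × (Fin m₂ → ℝ) × (Fin s → ℝ) × (Fin m₂ → ℝ)) :=
  {p | p.1 ∈ Dt ∧ p.2.2.1 ∈ Dz ∧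
    cE (p.1, vabs p.2.2.1) = 0 ∧
    cI (p.1, vabs p.2.2.1) - vabs p.2.2.2 = 0 ∧
    cZ (p.1, vabs p.2.2.1) - p.2.2.1 = 0 ∧
    p.2.1 - p.2.2.2 = 0}

/-- Feasible set of the counterpart MPCC of the slack reformulation:
points `(t, w, uᵗ, vᵗ, u^w, v^w)`. -/
def Fempcc {n s m₁ m₂ : ℕ} (Dt : Set (Fin n → ℝ)) (Dz : Set (Fin s → ℝ))
    (cE : (Fin n → ℝ) × (Fin s → ℝ) → Fin m₁ → ℝ)
    (cI : (Fin n → ℝ) × (Fin s → ℝ) → Fin m₂ → ℝ)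
    (cZ : (Fin n → ℝ) × (Fin s → ℝ) → Fin s → ℝ) :
    Set ((Fin n → ℝ) × (Fin m₂ → ℝ) × (Fin s → ℝ) × (Fin s → ℝ) ×
      (Fin m₂ → ℝ) × (Fin m₂ → ℝ)) :=
  {q | q.1 ∈ Dt ∧ q.2.2.1 + q.2.2.2.1 ∈ Dz ∧
    (∀ i, 0 ≤ q.2.2.1 i) ∧ (∀ i, 0 ≤ q.2.2.2.1 i) ∧
    (∀ i, q.2.2.1 i * q.2.2.2.1 i = 0) ∧
    (∀ i, 0 ≤ q.2.2.2.2.1 i) ∧ (∀ i, 0 ≤ q.2.2.2.2.2 i) ∧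
    (∀ i, q.2.2.2.2.1 i * q.2.2.2.2.2 i = 0) ∧
    cE (q.1, q.2.2.1 + q.2.2.2.1) = 0 ∧
    cI (q.1, q.2.2.1 + q.2.2.2.1) - (q.2.2.2.2.1 + q.2.2.2.2.2) = 0 ∧
    cZ (q.1, q.2.2.1 + q.2.2.2.1) - (q.2.2.1 - q.2.2.2.1) = 0 ∧
    q.2.1 - (q.2.2.2.2.1 - q.2.2.2.2.2) = 0}

open Set

def Homeomorph.ofInvOn {X Y : Type*} [TopologicalSpace X] [TopologicalSpace Y]
    {f : X → Y} {g : Y → X} {s : Set X} {t : Set Y} (hf : ContinuousOn f s)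
    (hg : ContinuousOn g t) (hfst : MapsTo f s t) (hgts : MapsTo g t s) (hinv : InvOn g f s t) :
    s ≃ₜ t where
  toFun := hfst.restrict f s t
  invFun := hgts.restrict g t s
  left_inv x := Subtype.ext (hinv.1 x.2)
  right_inv y := Subtype.ext (hinv.2 y.2)
  continuous_toFun := hf.mapsToRestrict hfst
  continuous_invFun := hg.mapsToRestrict hgts

section PiPosPart

variable {X ι α : Type*} [TopologicalSpace X] [TopologicalSpace α] [Lattice α] [AddGroup α]
  [ContinuousSup α] {f : X → ι → α}

@[fun_prop]
lemma Continuous.pi_posPart (hf : Continuous f) : Continuous fun x => (f x)⁺ :=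
  continuous_pi fun i => ((continuous_apply i).comp hf).sup continuous_const

@[fun_prop]
lemma Continuous.pi_negPart [ContinuousNeg α] (hf : Continuous f) : Continuous fun x => (f x)⁻ :=
  continuous_pi fun i => ((continuous_apply i).comp hf).neg.sup continuous_const

end PiPosPart

section Complementarity

variable {α : Type*} [Ring α] [LinearOrder α] [IsStrictOrderedRing α] {a b : α}

lemma abs_sub_eq_add_of_mul_eq_zero (ha : 0 ≤ a) (hb : 0 ≤ b) (h : a * b = 0) :
    |a - b| = a + b := by
  rcases mul_eq_zero.1 h with rfl | rfl <;> simp [ha, hb]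

lemma posPart_sub_eq_of_mul_eq_zero (ha : 0 ≤ a) (hb : 0 ≤ b) (h : a * b = 0) :
    (a - b)⁺ = a := by
  rcases mul_eq_zero.1 h with rfl | rfl <;> simp [ha, hb]

lemma negPart_sub_eq_of_mul_eq_zero (ha : 0 ≤ a) (hb : 0 ≤ b) (h : a * b = 0) :
    (a - b)⁻ = b := by
  rcases mul_eq_zero.1 h with rfl | rfl <;> simp [ha, hb]

lemma posPart_mul_negPart_eq_zero (a : α) : a⁺ * a⁻ = 0 := by
  rcases le_total a 0 with h | h <;> simp [h]

variable {ι : Type*} {u v : ι → α}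

lemma Pi.abs_sub_eq_add_of_mul_eq_zero (hu : 0 ≤ u) (hv : 0 ≤ v) (h : ∀ i, u i * v i = 0) :
    |u - v| = u + v :=
  funext fun i => _root_.abs_sub_eq_add_of_mul_eq_zero (hu i) (hv i) (h i)

lemma Pi.posPart_sub_eq_of_mul_eq_zero (hu : 0 ≤ u) (hv : 0 ≤ v) (h : ∀ i, u i * v i = 0) :
    (u - v)⁺ = u :=
  funext fun i => _root_.posPart_sub_eq_of_mul_eq_zero (hu i) (hv i) (h i)

lemma Pi.negPart_sub_eq_of_mul_eq_zero (hu : 0 ≤ u) (hv : 0 ≤ v) (h : ∀ i, u i * v i = 0) :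
    (u - v)⁻ = v :=
  funext fun i => _root_.negPart_sub_eq_of_mul_eq_zero (hu i) (hv i) (h i)

end Complementarity

/-- Invariance under multiplication by diagonal matrices with entries in `{-1, 0, 1}`. -/
def IsSignSymmetric {ι α : Type*} [Ring α] (D : Set (ι → α)) : Prop :=
  ∀ z ∈ D, ∀ σ : ι → α, (∀ i, σ i = -1 ∨ σ i = 0 ∨ σ i = 1) → (fun i => σ i * z i) ∈ D

lemma IsSignSymmetric.abs_mem_iff {ι α : Type*} [Ring α] [LinearOrder α] [IsStrictOrderedRing α]
    {D : Set (ι → α)} (hD : IsSignSymmetric D) {z : ι → α} : |z| ∈ D ↔ z ∈ D := by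
  have hσ : ∀ i, (SignType.sign (z i) : α) = -1 ∨ (SignType.sign (z i) : α) = 0 ∨
      (SignType.sign (z i) : α) = 1 := fun i => by
    cases SignType.sign (z i) <;> simp
  have hz : (fun i => (SignType.sign (z i) : α) * |z| i) = z := funext fun i => sign_mul_abs (z i)
  have habs : (fun i => (SignType.sign (z i) : α) * z i) = |z| :=
    funext fun i => sign_mul_self (z i)
  exact ⟨fun h => hz ▸ hD _ h _ hσ, fun h => habs ▸ hD _ h _ hσ⟩

section FeasibleSets

variable {n s m₁ m₂ : ℕ}

/-- The map `φ̄`. -/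
def mpccToAbs (q : (Fin n → ℝ) × (Fin m₂ → ℝ) × (Fin s → ℝ) × (Fin s → ℝ) ×
    (Fin m₂ → ℝ) × (Fin m₂ → ℝ)) : (Fin n → ℝ) × (Fin m₂ → ℝ) × (Fin s → ℝ) × (Fin m₂ → ℝ) :=
  (q.1, q.2.1, q.2.2.1 - q.2.2.2.1, q.2.2.2.2.1 - q.2.2.2.2.2)

/-- The map `φ̄⁻¹`. On `Fin s → ℝ`, Mathlib's `z⁺`, `z⁻` and `|z|` unfold to `posPart' z`,
`negPart' z` and `vabs z`, so both descriptions of the maps agree by `rfl`. -/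
def absToMpcc (p : (Fin n → ℝ) × (Fin m₂ → ℝ) × (Fin s → ℝ) × (Fin m₂ → ℝ)) :
    (Fin n → ℝ) × (Fin m₂ → ℝ) × (Fin s → ℝ) × (Fin s → ℝ) × (Fin m₂ → ℝ) × (Fin m₂ → ℝ) :=
  (p.1, p.2.1, p.2.2.1⁺, p.2.2.1⁻, p.2.2.2⁺, p.2.2.2⁻)

variable {Dt : Set (Fin n → ℝ)} {Dz : Set (Fin s → ℝ)}
  {cE : (Fin n → ℝ) × (Fin s → ℝ) → Fin m₁ → ℝ} {cI : (Fin n → ℝ) × (Fin s → ℝ) → Fin m₂ → ℝ}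
  {cZ : (Fin n → ℝ) × (Fin s → ℝ) → Fin s → ℝ}

lemma mapsTo_mpccToAbs (hDz : IsSignSymmetric Dz) :
    MapsTo mpccToAbs (Fempcc Dt Dz cE cI cZ) (Feabs Dt Dz cE cI cZ) := by
  rintro ⟨t, w, u, v, uw, vw⟩ ⟨ht, hz, hu, hv, huv, huw, hvw, huvw, hE, hI, hZ, hw⟩
  have habs : vabs (u - v) = u + v := Pi.abs_sub_eq_add_of_mul_eq_zero hu hv huv
  have habsw : vabs (uw - vw) = uw + vw := Pi.abs_sub_eq_add_of_mul_eq_zero huw hvw huvw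
  rw [← habs] at hz
  refine ⟨ht, hDz.abs_mem_iff.1 hz, ?_, ?_, ?_, hw⟩ <;>
    simp only [mpccToAbs, habs, habsw] <;> assumption

lemma mapsTo_absToMpcc (hDz : IsSignSymmetric Dz) :
    MapsTo absToMpcc (Feabs Dt Dz cE cI cZ) (Fempcc Dt Dz cE cI cZ) := by
  rintro ⟨t, w, z, zw⟩ ⟨ht, hz, hE, hI, hZ, hw⟩
  have hsum : z⁺ + z⁻ = vabs z := posPart_add_negPart z
  have hsumw : zw⁺ + zw⁻ = vabs zw := posPart_add_negPart zw
  refine ⟨ht, ?_, posPart_nonneg z, negPart_nonneg z, fun i => posPart_mul_negPart_eq_zero (z i),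
    posPart_nonneg zw, negPart_nonneg zw, fun i => posPart_mul_negPart_eq_zero (zw i), ?_, ?_, ?_,
    ?_⟩ <;> simp only [absToMpcc, hsum, hsumw, posPart_sub_negPart]
  exacts [hDz.abs_mem_iff.2 hz, hE, hI, hZ, hw]

lemma absToMpcc_mpccToAbs {q} (hq : q ∈ Fempcc Dt Dz cE cI cZ) : absToMpcc (mpccToAbs q) = q := by
  obtain ⟨t, w, u, v, uw, vw⟩ := q
  obtain ⟨-, -, hu, hv, huv, huw, hvw, huvw, -⟩ := hq
  simp only [absToMpcc, mpccToAbs, Pi.posPart_sub_eq_of_mul_eq_zero hu hv huv,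
    Pi.negPart_sub_eq_of_mul_eq_zero hu hv huv, Pi.posPart_sub_eq_of_mul_eq_zero huw hvw huvw,
    Pi.negPart_sub_eq_of_mul_eq_zero huw hvw huvw]

lemma mpccToAbs_absToMpcc (p : (Fin n → ℝ) × (Fin m₂ → ℝ) × (Fin s → ℝ) × (Fin m₂ → ℝ)) :
    mpccToAbs (absToMpcc p) = p := by
  simp only [absToMpcc, mpccToAbs, posPart_sub_negPart]

lemma continuous_mpccToAbs : Continuous (mpccToAbs (n := n) (s := s) (m₂ := m₂)) := by
  unfold mpccToAbs; fun_prop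

lemma continuous_absToMpcc : Continuous (absToMpcc (n := n) (s := s) (m₂ := m₂)) := by
  unfold absToMpcc; fun_prop

end FeasibleSets

theorem stmt2_general {n s m₁ m₂ : ℕ}
    (Dt : Set (Fin n → ℝ)) (Dz : Set (Fin s → ℝ))
    (hsym : ∀ z ∈ Dz, ∀ σ : Fin s → ℝ, (∀ i, σ i = -1 ∨ σ i = 0 ∨ σ i = 1) →
      (fun i => σ i * z i) ∈ Dz)
    (cE : (Fin n → ℝ) × (Fin s → ℝ) → Fin m₁ → ℝ)
    (cI : (Fin n → ℝ) × (Fin s → ℝ) → Fin m₂ → ℝ)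
    (cZ : (Fin n → ℝ) × (Fin s → ℝ) → Fin s → ℝ) :
    ∃ h : Fempcc Dt Dz cE cI cZ ≃ₜ Feabs Dt Dz cE cI cZ,
      (∀ q : Fempcc Dt Dz cE cI cZ,
        (h q : (Fin n → ℝ) × (Fin m₂ → ℝ) × (Fin s → ℝ) × (Fin m₂ → ℝ)) =
          ((q : (Fin n → ℝ) × (Fin m₂ → ℝ) × (Fin s → ℝ) × (Fin s → ℝ) ×
              (Fin m₂ → ℝ) × (Fin m₂ → ℝ)).1,
           (q : (Fin n → ℝ) × (Fin m₂ → ℝ) × (Fin s → ℝ) × (Fin s → ℝ) ×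
              (Fin m₂ → ℝ) × (Fin m₂ → ℝ)).2.1,
           (q : (Fin n → ℝ) × (Fin m₂ → ℝ) × (Fin s → ℝ) × (Fin s → ℝ) ×
              (Fin m₂ → ℝ) × (Fin m₂ → ℝ)).2.2.1 -
           (q : (Fin n → ℝ) × (Fin m₂ → ℝ) × (Fin s → ℝ) × (Fin s → ℝ) ×
              (Fin m₂ → ℝ) × (Fin m₂ → ℝ)).2.2.2.1,
           (q : (Fin n → ℝ) × (Fin m₂ → ℝ) × (Fin s → ℝ) × (Fin s → ℝ) ×
              (Fin m₂ → ℝ) × (Fin m₂ → ℝ)).2.2.2.2.1 -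
           (q : (Fin n → ℝ) × (Fin m₂ → ℝ) × (Fin s → ℝ) × (Fin s → ℝ) ×
              (Fin m₂ → ℝ) × (Fin m₂ → ℝ)).2.2.2.2.2)) ∧
      (∀ p : Feabs Dt Dz cE cI cZ,
        (h.symm p : (Fin n → ℝ) × (Fin m₂ → ℝ) × (Fin s → ℝ) × (Fin s → ℝ) ×
            (Fin m₂ → ℝ) × (Fin m₂ → ℝ)) =
          ((p : (Fin n → ℝ) × (Fin m₂ → ℝ) × (Fin s → ℝ) × (Fin m₂ → ℝ)).1,
           (p : (Fin n → ℝ) × (Fin m₂ → ℝ) × (Fin s → ℝ) × (Fin m₂ → ℝ)).2.1,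
           posPart' (p : (Fin n → ℝ) × (Fin m₂ → ℝ) × (Fin s → ℝ) × (Fin m₂ → ℝ)).2.2.1,
           negPart' (p : (Fin n → ℝ) × (Fin m₂ → ℝ) × (Fin s → ℝ) × (Fin m₂ → ℝ)).2.2.1,
           posPart' (p : (Fin n → ℝ) × (Fin m₂ → ℝ) × (Fin s → ℝ) × (Fin m₂ → ℝ)).2.2.2,
           negPart' (p : (Fin n → ℝ) × (Fin m₂ → ℝ) × (Fin s → ℝ) × (Fin m₂ → ℝ)).2.2.2)) :=
  ⟨Homeomorph.ofInvOn continuous_mpccToAbs.continuousOn continuous_absToMpcc.continuousOn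
    (mapsTo_mpccToAbs hsym) (mapsTo_absToMpcc hsym)
    ⟨fun _ hq => absToMpcc_mpccToAbs hq, fun p _ => mpccToAbs_absToMpcc p⟩,
    fun _ => rfl, fun _ => rfl⟩

/-- The map `φ̄(t,w,uᵗ,vᵗ,u^w,v^w) = (t, w, uᵗ-vᵗ, u^w-v^w)` is a homeomorphism
from `F_empcc` onto `F_eabs` with inverse
`φ̄⁻¹(t,w,zᵗ,z^w) = (t, w, [zᵗ]⁺, [zᵗ]⁻, [z^w]⁺, [z^w]⁻)`. -/
theorem stmt2 {n s m₁ m₂ : ℕ}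
    (Dt : Set (Fin n → ℝ)) (Dz : Set (Fin s → ℝ))
    (hDt : IsOpen Dt) (hDz : IsOpen Dz)
    (hsym : ∀ z ∈ Dz, ∀ σ : Fin s → ℝ, (∀ i, σ i = -1 ∨ σ i = 0 ∨ σ i = 1) →
      (fun i => σ i * z i) ∈ Dz)
    (cE : (Fin n → ℝ) × (Fin s → ℝ) → Fin m₁ → ℝ)
    (cI : (Fin n → ℝ) × (Fin s → ℝ) → Fin m₂ → ℝ)
    (cZ : (Fin n → ℝ) × (Fin s → ℝ) → Fin s → ℝ)
    (hcE : ContinuousOn cE (Dt ×ˢ Dz))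
    (hcI : ContinuousOn cI (Dt ×ˢ Dz))
    (hcZ : ContinuousOn cZ (Dt ×ˢ Dz)) :
    ∃ h : Fempcc Dt Dz cE cI cZ ≃ₜ Feabs Dt Dz cE cI cZ,
      (∀ q : Fempcc Dt Dz cE cI cZ,
        (h q : (Fin n → ℝ) × (Fin m₂ → ℝ) × (Fin s → ℝ) × (Fin m₂ → ℝ)) =
          ((q : (Fin n → ℝ) × (Fin m₂ → ℝ) × (Fin s → ℝ) × (Fin s → ℝ) ×
              (Fin m₂ → ℝ) × (Fin m₂ → ℝ)).1,
           (q : (Fin n → ℝ) × (Fin m₂ → ℝ) × (Fin s → ℝ) × (Fin s → ℝ) ×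
              (Fin m₂ → ℝ) × (Fin m₂ → ℝ)).2.1,
           (q : (Fin n → ℝ) × (Fin m₂ → ℝ) × (Fin s → ℝ) × (Fin s → ℝ) ×
              (Fin m₂ → ℝ) × (Fin m₂ → ℝ)).2.2.1 -
           (q : (Fin n → ℝ) × (Fin m₂ → ℝ) × (Fin s → ℝ) × (Fin s → ℝ) ×
              (Fin m₂ → ℝ) × (Fin m₂ → ℝ)).2.2.2.1,
           (q : (Fin n → ℝ) × (Fin m₂ → ℝ) × (Fin s → ℝ) × (Fin s → ℝ) ×
              (Fin m₂ → ℝ) × (Fin m₂ → ℝ)).2.2.2.2.1 -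
           (q : (Fin n → ℝ) × (Fin m₂ → ℝ) × (Fin s → ℝ) × (Fin s → ℝ) ×
              (Fin m₂ → ℝ) × (Fin m₂ → ℝ)).2.2.2.2.2)) ∧
      (∀ p : Feabs Dt Dz cE cI cZ,
        (h.symm p : (Fin n → ℝ) × (Fin m₂ → ℝ) × (Fin s → ℝ) × (Fin s → ℝ) ×
            (Fin m₂ → ℝ) × (Fin m₂ → ℝ)) =
          ((p : (Fin n → ℝ) × (Fin m₂ → ℝ) × (Fin s → ℝ) × (Fin m₂ → ℝ)).1,
           (p : (Fin n → ℝ) × (Fin m₂ → ℝ) × (Fin s → ℝ) × (Fin m₂ → ℝ)).2.1,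
           posPart' (p : (Fin n → ℝ) × (Fin m₂ → ℝ) × (Fin s → ℝ) × (Fin m₂ → ℝ)).2.2.1,
           negPart' (p : (Fin n → ℝ) × (Fin m₂ → ℝ) × (Fin s → ℝ) × (Fin m₂ → ℝ)).2.2.1,
           posPart' (p : (Fin n → ℝ) × (Fin m₂ → ℝ) × (Fin s → ℝ) × (Fin m₂ → ℝ)).2.2.2,
           negPart' (p : (Fin n → ℝ) × (Fin m₂ → ℝ) × (Fin s → ℝ) × (Fin m₂ → ℝ)).2.2.2)) :=
  stmt2_general Dt Dz hsym cE cI cZ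
end

section
/- Let E₁ ∈ ℝ^{m×n}, E₂ ∈ ℝ^{m×s}, A₁ ∈ ℝ^{a×n}, A₂ ∈ ℝ^{a×s}, Z₁ ∈ ℝ^{s×n}, Z₂ ∈ ℝ^{s×s} be real matrices, let σ ∈ {−1,0,1}^s, Σ = diag(σ), and set U = {i : σᵢ = 1}, V = {i : σᵢ = −1}, D = {i : σᵢ = 0}. Assume I − Z₂Σ is invertible and set W = (I − Z₂Σ)⁻¹Z₁ ∈ ℝ^{s×n}. Then the following two conditions are equivalent: (i) the matrix M = [[E₁, E₂P_Uᵀ, E₂P_Vᵀ], [Z₁, (Z₂−I)P_Uᵀ, (Z₂+I)P_Vᵀ]] ∈ ℝ^{(m+s)×(n+|U|+|V|)} has full row rank and there exists d ∈ ℝ^{n+|U|+|V|} with Md = 0 and [A₁, A₂P_Uᵀ, A₂P_Vᵀ]d > 0 componentwise; (ii) the matrix N = [[E₁ + E₂ΣW], [P_D W]] ∈ ℝ^{(m+|D|)×n} has full row rank and there exists d_x ∈ ℝ^n with (E₁ + E₂ΣW)d_x = 0, (P_D W)d_x = 0, and (A₁ + A₂ΣW)d_x > 0 componentwise. (With the matrices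 taken as the partial derivatives of cE, the active inequalities cA, and cZ at a feasible point, this is the equivalence of MPCC-MFCQ for the counterpart MPCC and IDKQ for the abs-normal NLP.) -/
/-!
Write `Σ = diag σ`, `T = 1 - Z₂ Σ`, `W = T⁻¹ Z₁` and `B = [-P_Uᵀ, P_Vᵀ]`. Because
`Σ P_Uᵀ = P_Uᵀ` and `Σ P_Vᵀ = -P_Vᵀ`, the MPCC matrix is `[[E₁, -E₂ Σ B], [Z₁, T B]]`, which
factors as `[[1, -E₂ Σ], [0, T]] * [[E₁ + E₂ Σ W, 0], [W, B]]` with an invertible left factor,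
and the objective block is `[A₁, -A₂ Σ B]`. The range of `B` is the kernel of `P_D` and the left
kernel of `B` is the row space of `P_D`, so eliminating the `B` column block turns full row rank
and the existence of `d` into the same conditions for `[[E₁ + E₂ Σ W], [P_D W]]`.
-/

open Matrix
open scoped Classical

noncomputable section

/-- Selection matrix `P_S` whose rows are the unit row vectors `eᵢᵀ`, `i ∈ S`. -/
def sel {k : ℕ} (p : Fin k → Prop) : Matrix {i // p i} (Fin k) ℝ :=
  Matrix.of fun i j => if (i : Fin k) = j then 1 else 0

section Selection

variable {k : ℕ}

theorem sel_mulVec_apply (p : Fin k → Prop) (w : Fin k → ℝ) (j : {i // p i}) :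
    (sel p *ᵥ w) j = w j := by
  simp [sel, mulVec, dotProduct, ite_mul]

theorem vecMul_sel_apply (p : Fin k → Prop) (η : {i // p i} → ℝ) (i : Fin k) :
    (η ᵥ* sel p) i = if h : p i then η ⟨i, h⟩ else 0 := by
  rw [vecMul, dotProduct]
  split_ifs with h
  · rw [Finset.sum_eq_single (⟨i, h⟩ : {i // p i})]
    · simp [sel]
    · intro j _ hj
      simp [sel, Subtype.coe_ne_coe.mpr hj]
    · simp
  · refine Finset.sum_eq_zero fun j _ => ?_
    have : (j : Fin k) ≠ i := fun hji => h (hji ▸ j.2)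
    simp [sel, this]

theorem vecMul_sel_injective (p : Fin k → Prop) : Function.Injective (sel p).vecMul := by
  intro η η' h
  funext j
  simpa [vecMul_sel_apply, j.2] using congrFun h j

theorem diagonal_mul_sel_transpose {σ : Fin k → ℝ} {p : Fin k → Prop} {c : ℝ}
    (h : ∀ i, p i → σ i = c) : diagonal σ * (sel p)ᵀ = c • (sel p)ᵀ := by
  ext i j
  by_cases hij : (j : Fin k) = i
  · simp [sel, hij, ← h i (hij ▸ j.2)]
  · simp [sel, hij]

end Selection

def signedSel {s : ℕ} (σ : Fin s → ℝ) :
    Matrix (Fin s) ({i // σ i = 1} ⊕ {i // σ i = -1}) ℝ :=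
  fromCols (-(sel fun i => σ i = 1)ᵀ) (sel fun i => σ i = -1)ᵀ

section SignedSelection

variable {s : ℕ} (σ : Fin s → ℝ)

theorem diagonal_mul_signedSel :
    diagonal σ * signedSel σ = -fromCols (sel fun i => σ i = 1)ᵀ (sel fun i => σ i = -1)ᵀ := by
  rw [signedSel, mul_fromCols, Matrix.mul_neg, diagonal_mul_sel_transpose (c := 1) fun _ h => h,
    diagonal_mul_sel_transpose (c := -1) fun _ h => h, fromCols_neg, one_smul, neg_smul, one_smul]

theorem fromCols_mul_sel_transpose {ι : Type*} (X : Matrix ι (Fin s) ℝ) :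
    fromCols (X * (sel fun i => σ i = 1)ᵀ) (X * (sel fun i => σ i = -1)ᵀ) =
      -(X * diagonal σ) * signedSel σ := by
  rw [Matrix.neg_mul, Matrix.mul_assoc, diagonal_mul_signedSel, Matrix.mul_neg, neg_neg,
    mul_fromCols]

theorem fromCols_sub_one_add_one_mul_sel_transpose (Z : Matrix (Fin s) (Fin s) ℝ) :
    fromCols ((Z - 1) * (sel fun i => σ i = 1)ᵀ) ((Z + 1) * (sel fun i => σ i = -1)ᵀ) =
      (1 - Z * diagonal σ) * signedSel σ := by
  rw [Matrix.sub_mul 1 (Z * diagonal σ), Matrix.one_mul, Matrix.mul_assoc, diagonal_mul_signedSel,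
    Matrix.mul_neg, sub_neg_eq_add, signedSel, mul_fromCols]
  ext i (j | j) <;> simp [Matrix.add_mul, sub_eq_neg_add, add_comm]

theorem signedSel_mulVec_sumElim (u : {i // σ i = 1} → ℝ) (v : {i // σ i = -1} → ℝ) :
    signedSel σ *ᵥ Sum.elim u v = v ᵥ* (sel fun i => σ i = -1) - u ᵥ* (sel fun i => σ i = 1) := by
  rw [signedSel, fromCols_mulVec_sumElim, neg_mulVec, mulVec_transpose, mulVec_transpose,
    neg_add_eq_sub]

theorem vecMul_signedSel (y : Fin s → ℝ) :
    y ᵥ* signedSel σ =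
      Sum.elim (-((sel fun i => σ i = 1) *ᵥ y)) ((sel fun i => σ i = -1) *ᵥ y) := by
  rw [signedSel, vecMul_fromCols, vecMul_neg, vecMul_transpose, vecMul_transpose]

variable {σ}

theorem range_mulVecLin_signedSel (hσ : ∀ i, σ i = -1 ∨ σ i = 0 ∨ σ i = 1) :
    LinearMap.range (signedSel σ).mulVecLin = LinearMap.ker (sel fun i => σ i = 0).mulVecLin := by
  ext w
  simp only [LinearMap.mem_range, LinearMap.mem_ker, mulVecLin_apply]
  constructor
  · rintro ⟨e, rfl⟩
    funext j
    have h₁ : σ j ≠ 1 := by rw [j.2]; norm_num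
    have h₂ : σ j ≠ -1 := by rw [j.2]; norm_num
    rw [← Sum.elim_comp_inl_inr e, signedSel_mulVec_sumElim, sel_mulVec_apply, Pi.sub_apply,
      vecMul_sel_apply, vecMul_sel_apply, dif_neg h₁, dif_neg h₂, sub_zero, Pi.zero_apply]
  · intro hw
    refine ⟨Sum.elim (-(sel _ *ᵥ w)) (sel _ *ᵥ w), funext fun i => ?_⟩
    rw [signedSel_mulVec_sumElim, Pi.sub_apply, neg_vecMul, Pi.neg_apply, sub_neg_eq_add,
      vecMul_sel_apply, vecMul_sel_apply]
    rcases hσ i with h | h | h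
    · norm_num [h, sel_mulVec_apply]
    · simpa [h, sel_mulVec_apply] using (congrFun hw ⟨i, h⟩).symm
    · norm_num [h, sel_mulVec_apply]

theorem ker_vecMulLinear_signedSel (hσ : ∀ i, σ i = -1 ∨ σ i = 0 ∨ σ i = 1) :
    LinearMap.ker (signedSel σ).vecMulLinear =
      LinearMap.range (sel fun i => σ i = 0).vecMulLinear := by
  ext y
  simp only [LinearMap.mem_range, LinearMap.mem_ker, vecMulLinear_apply, vecMul_signedSel,
    ← Sum.elim_zero_zero, Sum.elim_eq_iff, neg_eq_zero]
  constructor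
  · rintro ⟨hU, hV⟩
    refine ⟨sel _ *ᵥ y, funext fun i => ?_⟩
    rw [vecMul_sel_apply]
    rcases hσ i with h | h | h
    · simpa [h, sel_mulVec_apply] using (congrFun hV ⟨i, h⟩).symm
    · simp [h, sel_mulVec_apply]
    · simpa [h, sel_mulVec_apply] using (congrFun hU ⟨i, h⟩).symm
  · rintro ⟨η, rfl⟩
    constructor
    all_goals
      funext j
      have h : σ j ≠ 0 := by rw [j.2]; norm_num
      rw [sel_mulVec_apply, vecMul_sel_apply, dif_neg h, Pi.zero_apply]

end SignedSelection

namespace Matrix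

variable {K ι m n r s k : Type*}

theorem rank_eq_card_iff_vecMul_eq_zero [Field K] [Fintype m] [Fintype n] (A : Matrix m n K) :
    A.rank = Fintype.card m ↔ ∀ y, y ᵥ* A = 0 → y = 0 := by
  rw [eq_comm, rank_eq_finrank_span_row, ← Set.finrank,
    ← linearIndependent_iff_card_eq_finrank_span, ← vecMul_injective_iff, ← coe_vecMulLinear,
    injective_iff_map_eq_zero]
  rfl

theorem mul_mulVec_eq_zero_iff [Field K] [Fintype m] [Fintype n] [DecidableEq m]
    {L : Matrix m m K} (hL : IsUnit L) (A : Matrix m n K) (v : n → K) :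
    (L * A) *ᵥ v = 0 ↔ A *ᵥ v = 0 := by
  rw [← mulVec_mulVec, (mulVec_injective_iff_isUnit.mpr hL).eq_iff' (mulVec_zero L)]

theorem fromBlocks_eq_fromBlocks_one_mul [CommRing K] [Fintype m] [Fintype s] [DecidableEq m]
    [DecidableEq s] {T : Matrix s s K} (hT : IsUnit T) (E : Matrix m n K) (F : Matrix m s K)
    (Z : Matrix s n K) (B : Matrix s k K) :
    fromBlocks E (-F * B) Z (T * B) =
      (fromBlocks 1 (-F) 0 T : Matrix (m ⊕ s) (m ⊕ s) K) *
        fromBlocks (E + F * (T⁻¹ * Z)) 0 (T⁻¹ * Z) B := by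
  have hTT : T * T⁻¹ = 1 := mul_nonsing_inv T ((isUnit_iff_isUnit_det T).mp hT)
  rw [fromBlocks_multiply, ← Matrix.mul_assoc T, hTT]
  simp

theorem rank_fromBlocks_zero₁₂_eq_card_iff [Field K] [Fintype m] [Fintype n] [Fintype s]
    [Fintype r] [Fintype k] {N : Matrix m n K} {W : Matrix s n K} {B : Matrix s k K}
    {P : Matrix r s K}
    (hP : Function.Injective P.vecMul)
    (hB : LinearMap.ker B.vecMulLinear = LinearMap.range P.vecMulLinear) :
    (fromBlocks N 0 W B).rank = Fintype.card m + Fintype.card s ↔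
      (fromRows N (P * W)).rank = Fintype.card m + Fintype.card r := by
  have hB' : ∀ y, y ᵥ* B = 0 ↔ ∃ η, η ᵥ* P = y := fun y => by
    rw [← vecMulLinear_apply, ← LinearMap.mem_ker, hB]; rfl
  have hP' : ∀ η, η ᵥ* P = 0 → η = 0 := fun η hη => hP (hη.trans (zero_vecMul P).symm)
  rw [← Fintype.card_sum, ← Fintype.card_sum, rank_eq_card_iff_vecMul_eq_zero,
    rank_eq_card_iff_vecMul_eq_zero, ← fromRows_fromCols_eq_fromBlocks]
  constructor
  · intro h y hy
    rw [← Sum.elim_comp_inl_inr y, sumElim_vecMul_fromRows] at hy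
    have hzero := h (Sum.elim (y ∘ Sum.inl) (y ∘ Sum.inr ᵥ* P)) (by
      rw [sumElim_vecMul_fromRows, vecMul_fromCols, vecMul_fromCols, vecMul_zero,
        (hB' _).mpr ⟨_, rfl⟩, ← Sum.elim_add_add, vecMul_vecMul, hy, add_zero, Sum.elim_zero_zero])
    rw [← Sum.elim_comp_inl_inr y, ← Sum.elim_zero_zero, Sum.elim_eq_iff]
    rw [← Sum.elim_zero_zero, Sum.elim_eq_iff] at hzero
    exact ⟨hzero.1, hP' _ hzero.2⟩
  · intro h y hy
    rw [← Sum.elim_comp_inl_inr y, sumElim_vecMul_fromRows, vecMul_fromCols, vecMul_fromCols,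
      vecMul_zero, ← Sum.elim_add_add, zero_add, ← Sum.elim_zero_zero, Sum.elim_eq_iff] at hy
    obtain ⟨η, hη⟩ := (hB' _).mp hy.2
    have hzero := h (Sum.elim (y ∘ Sum.inl) η) (by
      rw [sumElim_vecMul_fromRows, ← vecMul_vecMul, hη, hy.1])
    rw [← Sum.elim_zero_zero, Sum.elim_eq_iff] at hzero
    rw [← Sum.elim_comp_inl_inr y, ← hη, hzero.1, hzero.2, zero_vecMul, Sum.elim_zero_zero]

theorem exists_fromBlocks_zero₁₂_mulVec_eq_zero_iff [CommRing K] [Fintype n] [Fintype s]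
    [Fintype k] {N : Matrix m n K} {W : Matrix s n K} {B : Matrix s k K} {P : Matrix r s K}
    (hB : LinearMap.range B.mulVecLin = LinearMap.ker P.mulVecLin)
    (A : Matrix ι n K) (C : Matrix ι s K) (p : (ι → K) → Prop) :
    (∃ d, fromBlocks N 0 W B *ᵥ d = 0 ∧ p (fromCols A (-C * B) *ᵥ d)) ↔
      ∃ x, N *ᵥ x = 0 ∧ (P * W) *ᵥ x = 0 ∧ p ((A + C * W) *ᵥ x) := by
  have hker : ∀ x e, fromBlocks N 0 W B *ᵥ Sum.elim x e = 0 ↔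
      N *ᵥ x = 0 ∧ B *ᵥ e = -(W *ᵥ x) := fun x e => by
    rw [fromBlocks_mulVec, Sum.elim_comp_inl, Sum.elim_comp_inr, zero_mulVec, add_zero,
      ← Sum.elim_zero_zero, Sum.elim_eq_iff, add_eq_zero_iff_eq_neg']
  have hobj : ∀ x e, B *ᵥ e = -(W *ᵥ x) →
      fromCols A (-C * B) *ᵥ Sum.elim x e = (A + C * W) *ᵥ x := fun x e he => by
    rw [fromCols_mulVec_sumElim, ← mulVec_mulVec, he, neg_mulVec, mulVec_neg,
      neg_neg, add_mulVec, mulVec_mulVec]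
  have hrange : ∀ x, (∃ e, B *ᵥ e = -(W *ᵥ x)) ↔ (P * W) *ᵥ x = 0 := fun x => by
    rw [← mulVec_mulVec]
    simpa only [LinearMap.mem_range, LinearMap.mem_ker, mulVecLin_apply, mulVec_neg, neg_eq_zero]
      using SetLike.ext_iff.mp hB (-(W *ᵥ x))
  constructor
  · rintro ⟨d, hd, hp⟩
    rw [← Sum.elim_comp_inl_inr d] at hd hp
    obtain ⟨hN, he⟩ := (hker _ _).mp hd
    exact ⟨_, hN, (hrange _).mp ⟨_, he⟩, hobj _ _ he ▸ hp⟩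
  · rintro ⟨x, hN, hPW, hp⟩
    obtain ⟨e, he⟩ := (hrange x).mpr hPW
    exact ⟨Sum.elim x e, (hker x e).mpr ⟨hN, he⟩, (hobj x e he).symm ▸ hp⟩

end Matrix

/-- MPCC-MFCQ for the counterpart MPCC is equivalent to IDKQ for the abs-normal NLP,
at the level of Jacobians. -/
theorem stmt7 {m a s n : ℕ}
    (E₁ : Matrix (Fin m) (Fin n) ℝ) (E₂ : Matrix (Fin m) (Fin s) ℝ)
    (A₁ : Matrix (Fin a) (Fin n) ℝ) (A₂ : Matrix (Fin a) (Fin s) ℝ)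
    (Z₁ : Matrix (Fin s) (Fin n) ℝ) (Z₂ : Matrix (Fin s) (Fin s) ℝ)
    (σ : Fin s → ℝ) (hσ : ∀ i, σ i = -1 ∨ σ i = 0 ∨ σ i = 1)
    (hinv : IsUnit (1 - Z₂ * Matrix.diagonal σ)) :
    ((Matrix.fromRows
        (Matrix.fromCols E₁ (Matrix.fromCols
          (E₂ * (sel fun i => σ i = 1)ᵀ) (E₂ * (sel fun i => σ i = -1)ᵀ)))
        (Matrix.fromCols Z₁ (Matrix.fromCols
          ((Z₂ - 1) * (sel fun i => σ i = 1)ᵀ)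
          ((Z₂ + 1) * (sel fun i => σ i = -1)ᵀ)))).rank = m + s ∧
      ∃ d : (Fin n ⊕ ({i // σ i = 1} ⊕ {i // σ i = -1})) → ℝ,
        (Matrix.fromRows
          (Matrix.fromCols E₁ (Matrix.fromCols
            (E₂ * (sel fun i => σ i = 1)ᵀ) (E₂ * (sel fun i => σ i = -1)ᵀ)))
          (Matrix.fromCols Z₁ (Matrix.fromCols
            ((Z₂ - 1) * (sel fun i => σ i = 1)ᵀ)
            ((Z₂ + 1) * (sel fun i => σ i = -1)ᵀ)))) *ᵥ d = 0 ∧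
        ∀ i, 0 < ((Matrix.fromCols A₁ (Matrix.fromCols
          (A₂ * (sel fun i => σ i = 1)ᵀ) (A₂ * (sel fun i => σ i = -1)ᵀ))) *ᵥ d) i)
    ↔ ((Matrix.fromRows
        (E₁ + E₂ * Matrix.diagonal σ * ((1 - Z₂ * Matrix.diagonal σ)⁻¹ * Z₁))
        (sel (fun i => σ i = 0) *
          ((1 - Z₂ * Matrix.diagonal σ)⁻¹ * Z₁))).rank
        = m + Fintype.card {i // σ i = 0} ∧
      ∃ dx : Fin n → ℝ,
        (E₁ + E₂ * Matrix.diagonal σ *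
          ((1 - Z₂ * Matrix.diagonal σ)⁻¹ * Z₁)) *ᵥ dx = 0 ∧
        (sel (fun i => σ i = 0) *
          ((1 - Z₂ * Matrix.diagonal σ)⁻¹ * Z₁)) *ᵥ dx = 0 ∧
        ∀ i, 0 < ((A₁ + A₂ * Matrix.diagonal σ *
          ((1 - Z₂ * Matrix.diagonal σ)⁻¹ * Z₁)) *ᵥ dx) i) := by
  have hdet : IsUnit (fromBlocks 1 (-(E₂ * diagonal σ)) 0 (1 - Z₂ * diagonal σ) :
      Matrix (Fin m ⊕ Fin s) (Fin m ⊕ Fin s) ℝ).det := by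
    rw [det_fromBlocks_zero₂₁, det_one, one_mul]
    exact (isUnit_iff_isUnit_det _).mp hinv
  rw [fromCols_mul_sel_transpose σ E₂, fromCols_mul_sel_transpose σ A₂,
    fromCols_sub_one_add_one_mul_sel_transpose, fromRows_fromCols_eq_fromBlocks,
    fromBlocks_eq_fromBlocks_one_mul hinv, rank_mul_eq_right_of_isUnit_det _ _ hdet]
  simp only [mul_mulVec_eq_zero_iff ((isUnit_iff_isUnit_det _).mpr hdet)]
  refine and_congr ?_ ?_
  · simpa only [Fintype.card_fin] using
      rank_fromBlocks_zero₁₂_eq_card_iff (m := Fin m) (vecMul_sel_injective _)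
        (ker_vecMulLinear_signedSel hσ)
  · exact exists_fromBlocks_zero₁₂_mulVec_eq_zero_iff (range_mulVecLin_signedSel hσ) A₁
      (A₂ * diagonal σ) fun v => ∀ i, 0 < v i

end
end

section
/- Let D^t ⊆ ℝ^n be open and D^z ⊆ ℝ^s be open and symmetric under componentwise sign changes. Let f : D^t → ℝ and cE : D^t × D^z → ℝ^{m₁}, cI : D^t × D^z → ℝ^{m₂}, cZ : D^t × D^z → ℝ^s be continuously differentiable. Let y* = (t*, u*, v*) with t* ∈ D^t, u* + v* ∈ D^z, u*, v* ≥ 0, u*ᵢv*ᵢ = 0 for all i, cE(t*,u*+v*) = 0, cI(t*,u*+v*) ≥ 0, cZ(t*,u*+v*) = u* − v*, and suppose y* is a local minimizer of (t,u,v) ↦ f(t) over the feasible set F_mpcc = {(t,u,v) : t ∈ D^t, u+v ∈ D^z, u ≥ 0, v ≥ 0, uᵢvᵢ = 0 ∀i, cE(t,u+v) = 0, cI(t,u+v) ≥ 0, cZ(t,u+v) = u−v}. Set U₊ = {i : u*ᵢ > 0}, V₊ = {i : v*ᵢ > 0}, D = {i : u*ᵢ = v*ᵢ = 0}, A = {i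 : cIᵢ(t*,u*+v*) = 0}, and let a star on ∂₁, ∂₂ denote evaluation at (t*, u*+v*). Assume MPCC-LICQ: the matrix [[∂₁cE*, ∂₂cE*P_{U₊}ᵀ, ∂₂cE*P_{V₊}ᵀ], [P_A∂₁cI*, P_A∂₂cI*P_{U₊}ᵀ, P_A∂₂cI*P_{V₊}ᵀ], [∂₁cZ*, (∂₂cZ*−I)P_{U₊}ᵀ, (∂₂cZ*+I)P_{V₊}ᵀ]] has full row rank m₁ + |A| + s. Then y* is S-stationary: there exist λ_E ∈ ℝ^{m₁}, λ_I ∈ ℝ^{m₂}, λ_Z ∈ ℝ^s and μᵘ, μᵛ ∈ ℝ^s with ∇f(t*) + (∂₁cE*)ᵀλ_E − (∂₁cI*)ᵀλ_I + (∂₁cZ*)ᵀλ_Z = 0; (∂₂cE*)ᵀλ_E − (∂₂cI*)ᵀλ_I + (∂₂cZ* − I)ᵀλ_Z − μᵘ = 0; (∂₂cE*)ᵀλ_E − (∂₂cI*)ᵀλ_I + (∂₂cZ* + I)ᵀλ_Z − μᵛ = 0; μᵘᵢ ≥ 0 and μᵛᵢ ≥ 0 for i ∈ D; μᵘᵢ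 = 0 for i ∈ U₊; μᵛᵢ = 0 for i ∈ V₊; λ_I ≥ 0; and λ_Iᵀ cI(t*,u*+v*) = 0. -/
open Matrix
open scoped Classical

noncomputable section

/-- Partial Jacobian with respect to the first argument. -/
def jac1 {n s m : ℕ} (c : (Fin n → ℝ) × (Fin s → ℝ) → Fin m → ℝ)
    (p : (Fin n → ℝ) × (Fin s → ℝ)) : Matrix (Fin m) (Fin n) ℝ :=
  Matrix.of fun i j => fderiv ℝ c p (Pi.single j 1, 0) i

/-- Partial Jacobian with respect to the second argument. -/
def jac2 {n s m : ℕ} (c : (Fin n → ℝ) × (Fin s → ℝ) → Fin m → ℝ)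
    (p : (Fin n → ℝ) × (Fin s → ℝ)) : Matrix (Fin m) (Fin s) ℝ :=
  Matrix.of fun i j => fderiv ℝ c p (0, Pi.single j 1) i

/-!
Near `y*`, each of the two branches of the tightened problem (at every biactive index either
`uᵢ ≥ 0, vᵢ = 0` or `uᵢ = 0, vᵢ ≥ 0`) lies in the feasible set, so `y*` minimizes `f` on both.
On either branch the constraints active at `y*` are `cE = 0`, the active `cIⱼ ≥ 0`,
`cZ - u + v = 0`, and `uᵢ` for `i ∉ U₊`, `vᵢ` for `i ∉ V₊`. MPCC-LICQ says exactly that their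
joint derivative `Φ'` is onto, since the coordinates `uᵢ`, `vᵢ` vanishing at `y*` can be
prescribed freely. The Lagrange multiplier rule then gives one vector `ℓ` with `∇f = ℓ ∘ Φ'`,
and following a local right inverse of `Φ` into either branch shows that `ℓ` is nonnegative on
the inequality constraints of both, in particular on `uᵢ` and `vᵢ` at every biactive index.
-/

open Filter Topology

theorem LinearMap.apply_eq_dotProduct {ι : Type*} [Fintype ι] [DecidableEq ι]
    (L : (ι → ℝ) →ₗ[ℝ] ℝ) (x : ι → ℝ) : L x = (fun i => L (Pi.single i 1)) ⬝ᵥ x := by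
  conv_lhs => rw [L.pi_apply_eq_sum_univ x]
  refine Finset.sum_congr rfl fun i _ => ?_
  rw [smul_eq_mul, mul_comm]
  congr 2
  funext j
  simp [Pi.single_apply, eq_comm]

theorem dotProduct_eq_of_forall_apply_eq {ι κ : Type*} [Fintype ι] [DecidableEq ι] [Fintype κ]
    (L : (ι → ℝ) →L[ℝ] ℝ) {g₁ : ι → ℝ} {g₂ g₃ : κ → ℝ}
    (h : ∀ t u v, L t = g₁ ⬝ᵥ t + g₂ ⬝ᵥ u + g₃ ⬝ᵥ v) :
    (fun i => L (Pi.single i 1)) = g₁ ∧ g₂ = 0 ∧ g₃ = 0 := by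
  refine ⟨dotProduct_eq _ _ fun t => ?_, dotProduct_eq _ _ fun u => ?_,
    dotProduct_eq _ _ fun v => ?_⟩
  · have := h t 0 0
    rw [dotProduct_zero, dotProduct_zero, add_zero, add_zero] at this
    exact (L.toLinearMap.apply_eq_dotProduct t).symm.trans this
  · simpa using (h 0 u 0).symm
  · simpa using (h 0 0 v).symm

theorem Matrix.mulVec_surjective_of_rank_eq_card {m k : Type*} [Fintype m]
    [Fintype k] {M : Matrix m k ℝ} (h : M.rank = Fintype.card m) :
    Function.Surjective M.mulVec := by
  rw [← Matrix.coe_mulVecLin, ← LinearMap.range_eq_top]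
  apply Submodule.eq_top_of_finrank_eq
  rw [← Matrix.rank, h, Module.finrank_fintype_fun_eq_card]

section PiMaps

variable {𝕜 E : Type*} [NontriviallyNormedField 𝕜] [NormedAddCommGroup E] [NormedSpace 𝕜 E]
  {α β : Type*}

def ContinuousLinearMap.sumElim (g : E →L[𝕜] (α → 𝕜)) (h : E →L[𝕜] (β → 𝕜)) :
    E →L[𝕜] (α ⊕ β → 𝕜) :=
  ContinuousLinearMap.pi (Sum.elim (fun a => (ContinuousLinearMap.proj a).comp g)
    (fun b => (ContinuousLinearMap.proj b).comp h))

@[simp]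
theorem ContinuousLinearMap.sumElim_apply (g : E →L[𝕜] (α → 𝕜)) (h : E →L[𝕜] (β → 𝕜)) (x : E) :
    g.sumElim h x = Sum.elim (g x) (h x) := by
  ext (a | b) <;> rfl

theorem HasStrictFDerivAt.sumElim {φ : E → α → 𝕜} {ψ : E → β → 𝕜}
    {φ' : E →L[𝕜] (α → 𝕜)} {ψ' : E →L[𝕜] (β → 𝕜)} {x : E}
    (hφ : HasStrictFDerivAt φ φ' x) (hψ : HasStrictFDerivAt ψ ψ' x) :
    HasStrictFDerivAt (fun x => Sum.elim (φ x) (ψ x)) (φ'.sumElim ψ') x :=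
  hasStrictFDerivAt_pi'.2 <| by
    rintro (a | b)
    exacts [hasStrictFDerivAt_pi'.1 hφ a, hasStrictFDerivAt_pi'.1 hψ b]

def ContinuousLinearMap.restrictPi {ι : Type*} (p : ι → Prop) : (ι → 𝕜) →L[𝕜] ({i // p i} → 𝕜) :=
  ContinuousLinearMap.pi fun i => ContinuousLinearMap.proj (i : ι)

@[simp]
theorem ContinuousLinearMap.restrictPi_apply {ι : Type*} (p : ι → Prop) (w : ι → 𝕜) :
    ContinuousLinearMap.restrictPi p w = fun i : {i // p i} => w i :=
  rfl

end PiMaps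

theorem HasStrictFDerivAt.exists_hasFDerivAt_rightInverse {𝕜 E F : Type*}
    [NontriviallyNormedField 𝕜] [NormedAddCommGroup E] [NormedSpace 𝕜 E]
    [NormedAddCommGroup F] [NormedSpace 𝕜 F] [CompleteSpace F]
    {Φ : E → F} {Φ' : E →L[𝕜] F} {a : E} (hΦ : HasStrictFDerivAt Φ Φ' a)
    {R : F →L[𝕜] E} (hR : Φ'.comp R = .id 𝕜 F) :
    ∃ γ : F → E, γ (Φ a) = a ∧ HasFDerivAt γ R (Φ a) ∧ ∀ᶠ y in 𝓝 (Φ a), Φ (γ y) = y := by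
  set Ψ : F → F := fun z => Φ (a + R z)
  have hΨ : HasStrictFDerivAt Ψ (ContinuousLinearEquiv.refl 𝕜 F : F →L[𝕜] F) 0 := by
    have hlin : HasStrictFDerivAt (fun z => a + R z) R 0 := R.hasStrictFDerivAt.const_add a
    have := (show HasStrictFDerivAt Φ Φ' (a + R 0) by simpa using hΦ).comp 0 hlin
    simpa [hR] using this
  have hΨ0 : Ψ 0 = Φ a := by simp [Ψ]
  refine ⟨fun y => a + R (hΨ.localInverse Ψ _ 0 y), ?_, ?_, ?_⟩
  · simp [← hΨ0]
  · have := (R.hasFDerivAt.comp (Ψ 0) hΨ.to_localInverse.hasFDerivAt).const_add a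
    simpa [hΨ0] using this
  · simpa [hΨ0] using hΨ.eventually_right_inverse

theorem ContinuousAt.eventually_forall_pos {X ι : Type*} [TopologicalSpace X] [Finite ι]
    {g : X → ι → ℝ} {a : X} (hg : ContinuousAt g a) :
    ∀ᶠ x in 𝓝 a, ∀ i, 0 < g a i → 0 < g x i := by
  refine eventually_all.2 fun i => ?_
  by_cases h : 0 < g a i
  · filter_upwards [((continuous_apply i).continuousAt.comp hg).eventually (lt_mem_nhds h)]
      with x hx using fun _ => hx
  · exact Eventually.of_forall fun _ h' => absurd h' h

section Multipliers

variable {E F : Type*} [NormedAddCommGroup E] [NormedSpace ℝ E] [NormedAddCommGroup F]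
  [NormedSpace ℝ F] {f : E → ℝ} {f' : E →L[ℝ] ℝ} {a : E}

theorem IsLocalExtrOn.exists_dual_of_hasStrictFDerivAt_of_surjective [CompleteSpace E]
    [CompleteSpace F] {Φ : E → F} {Φ' : E →L[ℝ] F}
    (hextr : IsLocalExtrOn f {x | Φ x = Φ a} a) (hf : HasStrictFDerivAt f f' a)
    (hΦ : HasStrictFDerivAt Φ Φ' a) (hsurj : Function.Surjective Φ') :
    ∃ Λ : Module.Dual ℝ F, ∀ x, f' x = Λ (Φ' x) := by
  obtain ⟨Λ, Λ₀, hne, hΛ⟩ := hextr.exists_linear_map_of_hasStrictFDerivAt hΦ hf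
  have hΛ₀ : Λ₀ ≠ 0 := by
    rintro rfl
    refine hne (Prod.ext (LinearMap.ext fun y => ?_) rfl)
    obtain ⟨x, rfl⟩ := hsurj y
    simpa using hΛ x
  refine ⟨-Λ₀⁻¹ • Λ, fun x => ?_⟩
  have := hΛ x
  simp only [smul_eq_mul] at this
  simp only [LinearMap.smul_apply, smul_eq_mul]
  field_simp
  linarith

-- `f ∘ γ` is minimized on `K` at `Φ a`, where `γ` is a local right inverse of `Φ` with
-- derivative a right inverse `R` of `Φ'`; its derivative there is `f' ∘ R = Λ`.
theorem IsLocalMinOn.dual_nonneg_of_mem_posTangentConeAt [FiniteDimensional ℝ F]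
    {Φ : E → F} {Φ' : E →L[ℝ] F} {K : Set F}
    (hmin : IsLocalMinOn f (Φ ⁻¹' K) a) (hf : HasFDerivAt f f' a)
    (hΦ : HasStrictFDerivAt Φ Φ' a) (hsurj : Function.Surjective Φ')
    {Λ : Module.Dual ℝ F} (hΛ : ∀ x, f' x = Λ (Φ' x))
    {y : F} (hy : y ∈ posTangentConeAt K (Φ a)) : 0 ≤ Λ y := by
  obtain ⟨R, hR⟩ := Φ'.exists_rightInverse_of_surjective (LinearMap.range_eq_top.2 hsurj)
  obtain ⟨γ, hγa, hγ, hΦγ⟩ := hΦ.exists_hasFDerivAt_rightInverse hR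
  have hγK : Tendsto γ (𝓝[K] (Φ a)) (𝓝[Φ ⁻¹' K] a) := by
    refine tendsto_nhdsWithin_iff.2 ⟨?_, ?_⟩
    · have := hγ.continuousAt.tendsto
      rw [hγa] at this
      exact this.mono_left nhdsWithin_le_nhds
    · filter_upwards [nhdsWithin_le_nhds hΦγ, self_mem_nhdsWithin] with z hz hzK
      simpa [hz] using hzK
  have hmin' : IsLocalMinOn (f ∘ γ) K (Φ a) :=
    IsMinFilter.comp_tendsto (l := 𝓝[Φ ⁻¹' K] a) (by rwa [hγa]) hγK
  have hfγ : HasFDerivAt (f ∘ γ) (f'.comp R) (Φ a) := (hγa ▸ hf).comp (Φ a) hγ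
  have := hmin'.hasFDerivWithinAt_nonneg hfγ.hasFDerivWithinAt hy
  rwa [ContinuousLinearMap.comp_apply, hΛ, ← ContinuousLinearMap.comp_apply, hR] at this

def orthantFace {ι : Type*} (I : ι → Prop) : Set (ι → ℝ) :=
  {y | ∀ i, (I i → 0 ≤ y i) ∧ (¬ I i → y i = 0)}

theorem zero_mem_orthantFace {ι : Type*} (I : ι → Prop) : (0 : ι → ℝ) ∈ orthantFace I :=
  fun _ => ⟨fun _ => le_rfl, fun _ => rfl⟩

theorem single_mem_posTangentConeAt_orthantFace {ι : Type*} [Fintype ι] [DecidableEq ι]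
    {I : ι → Prop} {r : ι} (hr : I r) :
    Pi.single r (1 : ℝ) ∈ posTangentConeAt (orthantFace I) 0 := by
  refine mem_posTangentConeAt_of_segment_subset ?_
  rw [segment_eq_image']
  rintro _ ⟨θ, ⟨hθ, -⟩, rfl⟩ i
  by_cases hi : i = r
  · subst hi
    simp [hθ, hr]
  · simp [hi]

theorem exists_multipliers_of_isLocalMinOn_orthantFace {ι κ : Type*} [CompleteSpace E]
    [Fintype ι] [DecidableEq ι] [Nonempty κ] {Φ : E → ι → ℝ} {Φ' : E →L[ℝ] (ι → ℝ)}
    (hf : HasStrictFDerivAt f f' a) (hΦ : HasStrictFDerivAt Φ Φ' a)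
    (hsurj : Function.Surjective Φ') (hΦa : Φ a = 0) {I : κ → ι → Prop}
    (hmin : ∀ k, IsLocalMinOn f (Φ ⁻¹' orthantFace (I k)) a) :
    ∃ ℓ : ι → ℝ, (∀ x, f' x = ℓ ⬝ᵥ Φ' x) ∧ ∀ k r, I k r → 0 ≤ ℓ r := by
  obtain ⟨k⟩ := ‹Nonempty κ›
  obtain ⟨Λ, hΛ⟩ := IsLocalExtrOn.exists_dual_of_hasStrictFDerivAt_of_surjective
    (Or.inl <| (hmin k).on_subset fun x (hx : Φ x = Φ a) => by
      rw [Set.mem_preimage, hx, hΦa]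
      exact zero_mem_orthantFace _) hf hΦ hsurj
  refine ⟨fun r => Λ (Pi.single r 1), fun x => (hΛ x).trans (Λ.apply_eq_dotProduct _),
    fun k r hr => ?_⟩
  exact (hmin k).dual_nonneg_of_mem_posTangentConeAt hf.hasFDerivAt hΦ hsurj hΛ
    (hΦa ▸ single_mem_posTangentConeAt_orthantFace hr)

end Multipliers

theorem fderiv_apply_eq_jac {n s m : ℕ} (c : (Fin n → ℝ) × (Fin s → ℝ) → Fin m → ℝ)
    (p : (Fin n → ℝ) × (Fin s → ℝ)) (t : Fin n → ℝ) (z : Fin s → ℝ) :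
    fderiv ℝ c p (t, z) = jac1 c p *ᵥ t + jac2 c p *ᵥ z := by
  ext k
  have hsplit : (t, z) = ContinuousLinearMap.inl ℝ _ _ t + ContinuousLinearMap.inr ℝ _ _ z := by
    simp
  rw [hsplit, map_add, Pi.add_apply, Pi.add_apply]
  congr 1
  · exact LinearMap.apply_eq_dotProduct (((ContinuousLinearMap.proj k).comp
      ((fderiv ℝ c p).comp (ContinuousLinearMap.inl ℝ _ _))) : (Fin n → ℝ) →ₗ[ℝ] ℝ) t
  · exact LinearMap.apply_eq_dotProduct (((ContinuousLinearMap.proj k).comp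
      ((fderiv ℝ c p).comp (ContinuousLinearMap.inr ℝ _ _))) : (Fin s → ℝ) →ₗ[ℝ] ℝ) z

theorem sel_mulVec {k : ℕ} (p : Fin k → Prop) (w : Fin k → ℝ) :
    sel p *ᵥ w = ContinuousLinearMap.restrictPi p w := by
  ext i
  simp [sel, mulVec, dotProduct, ite_mul]

theorem sel_transpose_mulVec_apply {k : ℕ} (p : Fin k → Prop) [Fintype {i // p i}]
    (w : {i // p i} → ℝ) (i : Fin k) :
    ((sel p)ᵀ *ᵥ w) i = if h : p i then w ⟨i, h⟩ else 0 := by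
  simp only [mulVec, dotProduct, transpose_apply, sel, of_apply, ite_mul, one_mul, zero_mul]
  split_ifs with h
  · rw [Finset.sum_eq_single ⟨i, h⟩]
    · simp
    · rintro j - hj
      exact if_neg fun e => hj (Subtype.ext e)
    · simp
  · refine Finset.sum_eq_zero fun j _ => if_neg ?_
    rintro rfl
    exact h j.2

section Mpcc

variable {n s m₁ m₂ : ℕ}

abbrev MpccRow (m₁ : ℕ) (act : Fin m₂ → Prop) (s : ℕ) : Type :=
  Fin m₁ ⊕ ({j // act j} ⊕ Fin s)

-- Indices of the constraints active at `y*` on either branch, for `act = A`, `pu = U₊`,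
-- `pv = V₊`: the rows of MPCC-LICQ, then `uᵢ` for `i ∉ U₊` and `vᵢ` for `i ∉ V₊`.
abbrev TnlpIndex (m₁ : ℕ) (act : Fin m₂ → Prop) (pu pv : Fin s → Prop) : Type :=
  MpccRow m₁ act s ⊕ ({i // ¬ pu i} ⊕ {i // ¬ pv i})

def mergeUV (n s : ℕ) :
    ((Fin n → ℝ) × (Fin s → ℝ) × (Fin s → ℝ)) →L[ℝ] (Fin n → ℝ) × (Fin s → ℝ) :=
  (ContinuousLinearMap.fst ℝ _ _).prod
    ((ContinuousLinearMap.fst ℝ (Fin s → ℝ) (Fin s → ℝ) +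
      ContinuousLinearMap.snd ℝ (Fin s → ℝ) (Fin s → ℝ)).comp (ContinuousLinearMap.snd ℝ _ _))

@[simp]
theorem mergeUV_apply (q : (Fin n → ℝ) × (Fin s → ℝ) × (Fin s → ℝ)) :
    mergeUV n s q = (q.1, q.2.1 + q.2.2) :=
  rfl

def uPart (n s : ℕ) : ((Fin n → ℝ) × (Fin s → ℝ) × (Fin s → ℝ)) →L[ℝ] (Fin s → ℝ) :=
  (ContinuousLinearMap.fst ℝ _ _).comp (ContinuousLinearMap.snd ℝ _ _)

def vPart (n s : ℕ) : ((Fin n → ℝ) × (Fin s → ℝ) × (Fin s → ℝ)) →L[ℝ] (Fin s → ℝ) :=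
  (ContinuousLinearMap.snd ℝ _ _).comp (ContinuousLinearMap.snd ℝ _ _)

@[simp]
theorem uPart_apply (q : (Fin n → ℝ) × (Fin s → ℝ) × (Fin s → ℝ)) : uPart n s q = q.2.1 :=
  rfl

@[simp]
theorem vPart_apply (q : (Fin n → ℝ) × (Fin s → ℝ) × (Fin s → ℝ)) : vPart n s q = q.2.2 :=
  rfl

def mpccRowConstr (cE : (Fin n → ℝ) × (Fin s → ℝ) → Fin m₁ → ℝ)
    (cI : (Fin n → ℝ) × (Fin s → ℝ) → Fin m₂ → ℝ) (cZ : (Fin n → ℝ) × (Fin s → ℝ) → Fin s → ℝ)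
    (act : Fin m₂ → Prop) (q : (Fin n → ℝ) × (Fin s → ℝ) × (Fin s → ℝ)) :
    MpccRow m₁ act s → ℝ :=
  Sum.elim (cE (mergeUV n s q))
    (Sum.elim (ContinuousLinearMap.restrictPi act (cI (mergeUV n s q)))
      (cZ (mergeUV n s q) - uPart n s q + vPart n s q))

def tnlpConstr (cE : (Fin n → ℝ) × (Fin s → ℝ) → Fin m₁ → ℝ)
    (cI : (Fin n → ℝ) × (Fin s → ℝ) → Fin m₂ → ℝ) (cZ : (Fin n → ℝ) × (Fin s → ℝ) → Fin s → ℝ)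
    (act : Fin m₂ → Prop) (pu pv : Fin s → Prop) (q : (Fin n → ℝ) × (Fin s → ℝ) × (Fin s → ℝ)) :
    TnlpIndex m₁ act pu pv → ℝ :=
  Sum.elim (mpccRowConstr cE cI cZ act q)
    (Sum.elim (ContinuousLinearMap.restrictPi (¬ pu ·) (uPart n s q))
      (ContinuousLinearMap.restrictPi (¬ pv ·) (vPart n s q)))

def mpccRowDeriv (DE : (Fin n → ℝ) × (Fin s → ℝ) →L[ℝ] (Fin m₁ → ℝ))
    (DI : (Fin n → ℝ) × (Fin s → ℝ) →L[ℝ] (Fin m₂ → ℝ))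
    (DZ : (Fin n → ℝ) × (Fin s → ℝ) →L[ℝ] (Fin s → ℝ)) (act : Fin m₂ → Prop) :
    ((Fin n → ℝ) × (Fin s → ℝ) × (Fin s → ℝ)) →L[ℝ] (MpccRow m₁ act s → ℝ) :=
  (DE.comp (mergeUV n s)).sumElim
    (((ContinuousLinearMap.restrictPi act).comp (DI.comp (mergeUV n s))).sumElim
      (DZ.comp (mergeUV n s) - uPart n s + vPart n s))

def tnlpDeriv (DE : (Fin n → ℝ) × (Fin s → ℝ) →L[ℝ] (Fin m₁ → ℝ))
    (DI : (Fin n → ℝ) × (Fin s → ℝ) →L[ℝ] (Fin m₂ → ℝ))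
    (DZ : (Fin n → ℝ) × (Fin s → ℝ) →L[ℝ] (Fin s → ℝ)) (act : Fin m₂ → Prop)
    (pu pv : Fin s → Prop) :
    ((Fin n → ℝ) × (Fin s → ℝ) × (Fin s → ℝ)) →L[ℝ] (TnlpIndex m₁ act pu pv → ℝ) :=
  (mpccRowDeriv DE DI DZ act).sumElim
    (((ContinuousLinearMap.restrictPi (¬ pu ·)).comp (uPart n s)).sumElim
      ((ContinuousLinearMap.restrictPi (¬ pv ·)).comp (vPart n s)))

def mpccLicqMatrix (cE : (Fin n → ℝ) × (Fin s → ℝ) → Fin m₁ → ℝ)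
    (cI : (Fin n → ℝ) × (Fin s → ℝ) → Fin m₂ → ℝ) (cZ : (Fin n → ℝ) × (Fin s → ℝ) → Fin s → ℝ)
    (p : (Fin n → ℝ) × (Fin s → ℝ)) (act : Fin m₂ → Prop) (pu pv : Fin s → Prop) :
    Matrix (MpccRow m₁ act s) (Fin n ⊕ ({i // pu i} ⊕ {i // pv i})) ℝ :=
  fromRows (fromCols (jac1 cE p) (fromCols (jac2 cE p * (sel pu)ᵀ) (jac2 cE p * (sel pv)ᵀ)))
    (fromRows
      (fromCols (sel act * jac1 cI p)
        (fromCols (sel act * jac2 cI p * (sel pu)ᵀ) (sel act * jac2 cI p * (sel pv)ᵀ)))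
      (fromCols (jac1 cZ p)
        (fromCols ((jac2 cZ p - 1) * (sel pu)ᵀ) ((jac2 cZ p + 1) * (sel pv)ᵀ))))

def mpccFeasible (Dt : Set (Fin n → ℝ)) (Dz : Set (Fin s → ℝ))
    (cE : (Fin n → ℝ) × (Fin s → ℝ) → Fin m₁ → ℝ)
    (cI : (Fin n → ℝ) × (Fin s → ℝ) → Fin m₂ → ℝ)
    (cZ : (Fin n → ℝ) × (Fin s → ℝ) → Fin s → ℝ) :
    Set ((Fin n → ℝ) × (Fin s → ℝ) × (Fin s → ℝ)) :=
  {q | q.1 ∈ Dt ∧ q.2.1 + q.2.2 ∈ Dz ∧ (∀ i, 0 ≤ q.2.1 i) ∧ (∀ i, 0 ≤ q.2.2 i) ∧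
    (∀ i, q.2.1 i * q.2.2 i = 0) ∧ cE (q.1, q.2.1 + q.2.2) = 0 ∧
    (∀ j, 0 ≤ cI (q.1, q.2.1 + q.2.2) j) ∧
    cZ (q.1, q.2.1 + q.2.2) = q.2.1 - q.2.2}

-- The inequality constraints of the branch keeping `uᵢ ≥ 0` (`b = true`) or `vᵢ ≥ 0`
-- (`b = false`) at the biactive indices.
def branchIneq {act : Fin m₂ → Prop} {pu pv : Fin s → Prop} (b : Bool) :
    TnlpIndex m₁ act pu pv → Prop :=
  Sum.elim (Sum.elim (fun _ => False) (Sum.elim (fun _ => True) (fun _ => False)))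
    (Sum.elim (fun i => b = true ∧ ¬ pv i) (fun i => b = false ∧ ¬ pu i))

def IsSStationary (f : (Fin n → ℝ) → ℝ)
    (cE : (Fin n → ℝ) × (Fin s → ℝ) → Fin m₁ → ℝ)
    (cI : (Fin n → ℝ) × (Fin s → ℝ) → Fin m₂ → ℝ)
    (cZ : (Fin n → ℝ) × (Fin s → ℝ) → Fin s → ℝ)
    (tstar : Fin n → ℝ) (ustar vstar : Fin s → ℝ) : Prop :=
  ∃ (lE : Fin m₁ → ℝ) (lI : Fin m₂ → ℝ) (lZ : Fin s → ℝ) (μu μv : Fin s → ℝ),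
      (fun j => fderiv ℝ f tstar (Pi.single j 1)) +
        (jac1 cE (tstar, ustar + vstar))ᵀ *ᵥ lE -
        (jac1 cI (tstar, ustar + vstar))ᵀ *ᵥ lI +
        (jac1 cZ (tstar, ustar + vstar))ᵀ *ᵥ lZ = 0 ∧
      (jac2 cE (tstar, ustar + vstar))ᵀ *ᵥ lE -
        (jac2 cI (tstar, ustar + vstar))ᵀ *ᵥ lI +
        (jac2 cZ (tstar, ustar + vstar) - 1)ᵀ *ᵥ lZ - μu = 0 ∧
      (jac2 cE (tstar, ustar + vstar))ᵀ *ᵥ lE -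
        (jac2 cI (tstar, ustar + vstar))ᵀ *ᵥ lI +
        (jac2 cZ (tstar, ustar + vstar) + 1)ᵀ *ᵥ lZ - μv = 0 ∧
      (∀ i, ustar i = 0 ∧ vstar i = 0 → 0 ≤ μu i ∧ 0 ≤ μv i) ∧
      (∀ i, 0 < ustar i → μu i = 0) ∧
      (∀ i, 0 < vstar i → μv i = 0) ∧
      (∀ j, 0 ≤ lI j) ∧
      lI ⬝ᵥ cI (tstar, ustar + vstar) = 0

variable {cE : (Fin n → ℝ) × (Fin s → ℝ) → Fin m₁ → ℝ}
  {cI : (Fin n → ℝ) × (Fin s → ℝ) → Fin m₂ → ℝ} {cZ : (Fin n → ℝ) × (Fin s → ℝ) → Fin s → ℝ}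
  {tstar : Fin n → ℝ} {ustar vstar : Fin s → ℝ}

theorem hasStrictFDerivAt_tnlpConstr {DE : (Fin n → ℝ) × (Fin s → ℝ) →L[ℝ] (Fin m₁ → ℝ)}
    {DI : (Fin n → ℝ) × (Fin s → ℝ) →L[ℝ] (Fin m₂ → ℝ)}
    {DZ : (Fin n → ℝ) × (Fin s → ℝ) →L[ℝ] (Fin s → ℝ)} (act : Fin m₂ → Prop) (pu pv : Fin s → Prop)
    {a : (Fin n → ℝ) × (Fin s → ℝ) × (Fin s → ℝ)}
    (hE : HasStrictFDerivAt cE DE (mergeUV n s a)) (hI : HasStrictFDerivAt cI DI (mergeUV n s a))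
    (hZ : HasStrictFDerivAt cZ DZ (mergeUV n s a)) :
    HasStrictFDerivAt (tnlpConstr cE cI cZ act pu pv) (tnlpDeriv DE DI DZ act pu pv) a := by
  have hM := (mergeUV n s).hasStrictFDerivAt (x := a)
  have hU := (uPart n s).hasStrictFDerivAt (x := a)
  have hV := (vPart n s).hasStrictFDerivAt (x := a)
  exact ((hE.comp a hM).sumElim
      (((ContinuousLinearMap.restrictPi act).hasStrictFDerivAt.comp a (hI.comp a hM)).sumElim
        (((hZ.comp a hM).sub hU).add hV))).sumElim
    (((ContinuousLinearMap.restrictPi (¬ pu ·)).hasStrictFDerivAt.comp a hU).sumElim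
      ((ContinuousLinearMap.restrictPi (¬ pv ·)).hasStrictFDerivAt.comp a hV))

theorem mpccLicqMatrix_mulVec (p : (Fin n → ℝ) × (Fin s → ℝ)) (act : Fin m₂ → Prop)
    (pu pv : Fin s → Prop) (wt : Fin n → ℝ) (wu : {i // pu i} → ℝ) (wv : {i // pv i} → ℝ) :
    mpccLicqMatrix cE cI cZ p act pu pv *ᵥ Sum.elim wt (Sum.elim wu wv) =
      mpccRowDeriv (fderiv ℝ cE p) (fderiv ℝ cI p) (fderiv ℝ cZ p) act
        (wt, (sel pu)ᵀ *ᵥ wu, (sel pv)ᵀ *ᵥ wv) := by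
  simp only [mpccLicqMatrix, mpccRowDeriv, fromRows_mulVec, fromCols_mulVec_sumElim,
    ContinuousLinearMap.sumElim_apply, ContinuousLinearMap.comp_apply, mergeUV_apply,
    fderiv_apply_eq_jac, _root_.add_apply, _root_.sub_apply, uPart_apply, vPart_apply,
    ← mulVec_mulVec, mulVec_add, sub_mulVec, add_mulVec, one_mulVec, ← sel_mulVec]
  congr 2
  abel

theorem tnlpDeriv_surjective {p : (Fin n → ℝ) × (Fin s → ℝ)} {act : Fin m₂ → Prop}
    {pu pv : Fin s → Prop}
    (hLICQ : (mpccLicqMatrix cE cI cZ p act pu pv).rank = m₁ + Fintype.card {j // act j} + s) :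
    Function.Surjective (tnlpDeriv (fderiv ℝ cE p) (fderiv ℝ cI p) (fderiv ℝ cZ p) act pu pv) := by
  have hM : Function.Surjective (mpccLicqMatrix cE cI cZ p act pu pv).mulVec :=
    mulVec_surjective_of_rank_eq_card (by rw [hLICQ]; simp [add_assoc])
  intro b
  set q₀ : (Fin n → ℝ) × (Fin s → ℝ) × (Fin s → ℝ) :=
    (0, (sel (¬ pu ·))ᵀ *ᵥ (fun i => b (.inr (.inl i))),
      (sel (¬ pv ·))ᵀ *ᵥ (fun i => b (.inr (.inr i))))
  obtain ⟨w, hw⟩ := hM fun r =>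
    b (.inl r) - mpccRowDeriv (fderiv ℝ cE p) (fderiv ℝ cI p) (fderiv ℝ cZ p) act q₀ r
  rw [← Sum.elim_comp_inl_inr w, ← Sum.elim_comp_inl_inr (w ∘ Sum.inr),
    mpccLicqMatrix_mulVec] at hw
  refine ⟨(w ∘ Sum.inl, (sel pu)ᵀ *ᵥ ((w ∘ Sum.inr) ∘ Sum.inl),
    (sel pv)ᵀ *ᵥ ((w ∘ Sum.inr) ∘ Sum.inr)) + q₀, ?_⟩
  ext (r | i | i)
  · simp [tnlpDeriv, hw]
  all_goals simp [tnlpDeriv, q₀, sel_transpose_mulVec_apply, i.2]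

theorem tnlpConstr_eq_zero (hu : ∀ i, 0 ≤ ustar i) (hv : ∀ i, 0 ≤ vstar i)
    (hfeasE : cE (tstar, ustar + vstar) = 0) (hfeasZ : cZ (tstar, ustar + vstar) = ustar - vstar) :
    tnlpConstr cE cI cZ (fun j => cI (tstar, ustar + vstar) j = 0) (fun i => 0 < ustar i)
      (fun i => 0 < vstar i) (tstar, ustar, vstar) = 0 := by
  ext ((k | j | i) | i | i)
  · simp [tnlpConstr, mpccRowConstr, hfeasE]
  · exact j.2
  · simp [tnlpConstr, mpccRowConstr, hfeasZ]
  · exact le_antisymm (not_lt.1 i.2) (hu i)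
  · exact le_antisymm (not_lt.1 i.2) (hv i)

theorem mem_mpccFeasible_of_mem_branch {Dt : Set (Fin n → ℝ)} {Dz : Set (Fin s → ℝ)}
    (hcompl : ∀ i, ustar i * vstar i = 0) (hfeasI : ∀ j, 0 ≤ cI (tstar, ustar + vstar) j)
    {b : Bool} {q : (Fin n → ℝ) × (Fin s → ℝ) × (Fin s → ℝ)} (ht : q.1 ∈ Dt)
    (hz : q.2.1 + q.2.2 ∈ Dz)
    (hI : ∀ j, 0 < cI (tstar, ustar + vstar) j → 0 < cI (q.1, q.2.1 + q.2.2) j)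
    (hU : ∀ i, 0 < ustar i → 0 < q.2.1 i) (hV : ∀ i, 0 < vstar i → 0 < q.2.2 i)
    (hK : tnlpConstr cE cI cZ (fun j => cI (tstar, ustar + vstar) j = 0) (fun i => 0 < ustar i)
      (fun i => 0 < vstar i) q ∈ orthantFace (branchIneq b)) :
    q ∈ mpccFeasible Dt Dz cE cI cZ := by
  have hu : ∀ i, ¬ 0 < ustar i → (b = true ∧ ¬ 0 < vstar i → 0 ≤ q.2.1 i) ∧
      (¬ (b = true ∧ ¬ 0 < vstar i) → q.2.1 i = 0) :=
    fun i hi => hK (.inr (.inl ⟨i, hi⟩))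
  have hv : ∀ i, ¬ 0 < vstar i → (b = false ∧ ¬ 0 < ustar i → 0 ≤ q.2.2 i) ∧
      (¬ (b = false ∧ ¬ 0 < ustar i) → q.2.2 i = 0) :=
    fun i hi => hK (.inr (.inr ⟨i, hi⟩))
  refine ⟨ht, hz, fun i => ?_, fun i => ?_, fun i => ?_, ?_, fun j => ?_, ?_⟩
  · by_cases hi : 0 < ustar i
    · exact (hU i hi).le
    · by_cases h : b = true ∧ ¬ 0 < vstar i
      exacts [(hu i hi).1 h, ((hu i hi).2 h).ge]
  · by_cases hi : 0 < vstar i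
    · exact (hV i hi).le
    · by_cases h : b = false ∧ ¬ 0 < ustar i
      exacts [(hv i hi).1 h, ((hv i hi).2 h).ge]
  · have hcompl' : 0 < ustar i → ¬ 0 < vstar i := fun h h' => (mul_pos h h').ne' (hcompl i)
    cases b
    · by_cases hi : 0 < ustar i
      · rw [(hv i (hcompl' hi)).2 (by simp [hi]), mul_zero]
      · rw [(hu i hi).2 (by simp), zero_mul]
    · by_cases hi : 0 < vstar i
      · rw [(hu i fun h => hcompl' h hi).2 (by simp [hi]), zero_mul]
      · rw [(hv i hi).2 (by simp), mul_zero]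
  · funext k
    exact (hK (.inl (.inl k))).2 not_false
  · by_cases hj : cI (tstar, ustar + vstar) j = 0
    · exact (hK (.inl (.inr (.inl ⟨j, hj⟩)))).1 trivial
    · exact (hI j (lt_of_le_of_ne (hfeasI j) (Ne.symm hj))).le
  · funext i
    have := (hK (.inl (.inr (.inr i)))).2 not_false
    simp only [tnlpConstr, mpccRowConstr, Sum.elim_inl, Sum.elim_inr, Pi.add_apply,
      Pi.sub_apply, uPart_apply, vPart_apply, mergeUV_apply] at this
    rw [Pi.sub_apply]
    linarith

theorem mpccFeasible_mem_nhdsWithin_branch {Dt : Set (Fin n → ℝ)} {Dz : Set (Fin s → ℝ)}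
    (hDt : IsOpen Dt) (hDz : IsOpen Dz) (ht : tstar ∈ Dt) (huv : ustar + vstar ∈ Dz)
    (hcompl : ∀ i, ustar i * vstar i = 0) (hfeasI : ∀ j, 0 ≤ cI (tstar, ustar + vstar) j)
    (hcI : ContinuousAt cI (tstar, ustar + vstar)) (b : Bool) :
    mpccFeasible Dt Dz cE cI cZ ∈ 𝓝[tnlpConstr cE cI cZ (fun j => cI (tstar, ustar + vstar) j = 0)
      (fun i => 0 < ustar i) (fun i => 0 < vstar i) ⁻¹' orthantFace (branchIneq b)]
      (tstar, ustar, vstar) := by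
  set a : (Fin n → ℝ) × (Fin s → ℝ) × (Fin s → ℝ) := (tstar, ustar, vstar)
  have hDt' : ∀ᶠ q in 𝓝 a, q.1 ∈ Dt :=
    continuous_fst.continuousAt.preimage_mem_nhds (hDt.mem_nhds ht)
  have hDz' : ∀ᶠ q in 𝓝 a, q.2.1 + q.2.2 ∈ Dz :=
    (uPart n s + vPart n s).continuous.continuousAt.preimage_mem_nhds (hDz.mem_nhds huv)
  have hI := (hcI.comp (mergeUV n s).continuous.continuousAt (x := a)).eventually_forall_pos
  have hU := (uPart n s).continuous.continuousAt.eventually_forall_pos (a := a)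
  have hV := (vPart n s).continuous.continuousAt.eventually_forall_pos (a := a)
  refine mem_nhdsWithin_iff_eventually.2 ?_
  filter_upwards [hDt', hDz', hI, hU, hV] with q hqt hqz hqI hqU hqV
  exact mem_mpccFeasible_of_mem_branch hcompl hfeasI hqt hqz hqI hqU hqV

theorem dotProduct_tnlpDeriv (p : (Fin n → ℝ) × (Fin s → ℝ)) (act : Fin m₂ → Prop)
    (pu pv : Fin s → Prop) (ℓE : Fin m₁ → ℝ) (ℓA : {j // act j} → ℝ) (ℓZ : Fin s → ℝ)
    (ξ : {i // ¬ pu i} → ℝ) (η : {i // ¬ pv i} → ℝ) (t : Fin n → ℝ) (u v : Fin s → ℝ) :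
    Sum.elim (Sum.elim ℓE (Sum.elim ℓA ℓZ)) (Sum.elim ξ η) ⬝ᵥ
        tnlpDeriv (fderiv ℝ cE p) (fderiv ℝ cI p) (fderiv ℝ cZ p) act pu pv (t, u, v) =
      ((jac1 cE p)ᵀ *ᵥ ℓE + (jac1 cI p)ᵀ *ᵥ ((sel act)ᵀ *ᵥ ℓA) + (jac1 cZ p)ᵀ *ᵥ ℓZ) ⬝ᵥ t +
      ((jac2 cE p)ᵀ *ᵥ ℓE + (jac2 cI p)ᵀ *ᵥ ((sel act)ᵀ *ᵥ ℓA) + (jac2 cZ p - 1)ᵀ *ᵥ ℓZ +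
        (sel (¬ pu ·))ᵀ *ᵥ ξ) ⬝ᵥ u +
      ((jac2 cE p)ᵀ *ᵥ ℓE + (jac2 cI p)ᵀ *ᵥ ((sel act)ᵀ *ᵥ ℓA) + (jac2 cZ p + 1)ᵀ *ᵥ ℓZ +
        (sel (¬ pv ·))ᵀ *ᵥ η) ⬝ᵥ v := by
  simp only [tnlpDeriv, mpccRowDeriv, ContinuousLinearMap.sumElim_apply,
    ContinuousLinearMap.comp_apply, _root_.add_apply, _root_.sub_apply, mergeUV_apply,
    uPart_apply, vPart_apply, fderiv_apply_eq_jac, ← sel_mulVec, sumElim_dotProduct_sumElim,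
    dotProduct_add, dotProduct_sub, add_dotProduct, dotProduct_mulVec, mulVec_transpose,
    vecMul_sub, vecMul_add, vecMul_one, sub_dotProduct, vecMul_vecMul]
  ring

theorem isSStationary_of_multipliers {f : (Fin n → ℝ) → ℝ}
    (ℓ : TnlpIndex m₁ (fun j => cI (tstar, ustar + vstar) j = 0) (fun i => 0 < ustar i)
      (fun i => 0 < vstar i) → ℝ)
    (hℓ : ∀ q, fderiv ℝ f tstar q.1 = ℓ ⬝ᵥ tnlpDeriv (fderiv ℝ cE (tstar, ustar + vstar))
      (fderiv ℝ cI (tstar, ustar + vstar)) (fderiv ℝ cZ (tstar, ustar + vstar)) _ _ _ q)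
    (hI : ∀ j, 0 ≤ ℓ (.inl (.inr (.inl j))))
    (hu : ∀ i : {i // ¬ 0 < ustar i}, ¬ 0 < vstar i → 0 ≤ ℓ (.inr (.inl i)))
    (hv : ∀ i : {i // ¬ 0 < vstar i}, ¬ 0 < ustar i → 0 ≤ ℓ (.inr (.inr i))) :
    IsSStationary f cE cI cZ tstar ustar vstar := by
  set ℓE : Fin m₁ → ℝ := fun k => ℓ (.inl (.inl k))
  set ℓA : {j // cI (tstar, ustar + vstar) j = 0} → ℝ := fun j => ℓ (.inl (.inr (.inl j)))
  set ℓZ : Fin s → ℝ := fun i => ℓ (.inl (.inr (.inr i)))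
  set ξ : {i // ¬ 0 < ustar i} → ℝ := fun i => ℓ (.inr (.inl i))
  set η : {i // ¬ 0 < vstar i} → ℝ := fun i => ℓ (.inr (.inr i))
  have hsplit : ℓ = Sum.elim (Sum.elim ℓE (Sum.elim ℓA ℓZ)) (Sum.elim ξ η) := by
    ext ((_ | _ | _) | _ | _) <;> rfl
  rw [hsplit] at hℓ
  have key t u v := (hℓ (t, u, v)).trans (dotProduct_tnlpDeriv _ _ _ _ ℓE ℓA ℓZ ξ η t u v)
  set lI := (sel fun j => cI (tstar, ustar + vstar) j = 0)ᵀ *ᵥ ℓA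
  set μu := (sel fun i => ¬ 0 < ustar i)ᵀ *ᵥ ξ
  set μv := (sel fun i => ¬ 0 < vstar i)ᵀ *ᵥ η
  obtain ⟨h₁, h₂, h₃⟩ := dotProduct_eq_of_forall_apply_eq (fderiv ℝ f tstar) key
  refine ⟨-ℓE, lI, -ℓZ, μu, μv, ?_, ?_, ?_, ?_, ?_, ?_, ?_, ?_⟩
  · rw [h₁, mulVec_neg, mulVec_neg]
    abel
  · rw [← neg_eq_zero, ← h₂, mulVec_neg, mulVec_neg]
    abel
  · rw [← neg_eq_zero, ← h₃, mulVec_neg, mulVec_neg]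
    abel
  · rintro i ⟨hu0, hv0⟩
    have hnu : ¬ 0 < ustar i := hu0.not_gt
    have hnv : ¬ 0 < vstar i := hv0.not_gt
    simp only [μu, μv, sel_transpose_mulVec_apply, dif_pos hnu, dif_pos hnv]
    exact ⟨hu ⟨i, hnu⟩ hnv, hv ⟨i, hnv⟩ hnu⟩
  · intro i hi
    simp [μu, sel_transpose_mulVec_apply, hi]
  · intro i hi
    simp [μv, sel_transpose_mulVec_apply, hi]
  · intro j
    simp only [lI, sel_transpose_mulVec_apply]
    split_ifs with h
    exacts [hI ⟨j, h⟩, le_rfl]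
  · refine Finset.sum_eq_zero fun j _ => ?_
    simp only [lI, sel_transpose_mulVec_apply]
    split_ifs with h
    · rw [h, mul_zero]
    · rw [zero_mul]

end Mpcc

theorem stmt11_general {n s m₁ m₂ : ℕ}
    (Dt : Set (Fin n → ℝ)) (Dz : Set (Fin s → ℝ))
    (hDt : IsOpen Dt) (hDz : IsOpen Dz)
    (f : (Fin n → ℝ) → ℝ)
    (cE : (Fin n → ℝ) × (Fin s → ℝ) → Fin m₁ → ℝ)
    (cI : (Fin n → ℝ) × (Fin s → ℝ) → Fin m₂ → ℝ)
    (cZ : (Fin n → ℝ) × (Fin s → ℝ) → Fin s → ℝ)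
    (hf : ContDiffOn ℝ 1 f Dt)
    (hcE : ContDiffOn ℝ 1 cE (Dt ×ˢ Dz))
    (hcI : ContDiffOn ℝ 1 cI (Dt ×ˢ Dz))
    (hcZ : ContDiffOn ℝ 1 cZ (Dt ×ˢ Dz))
    (tstar : Fin n → ℝ) (ustar vstar : Fin s → ℝ)
    (ht : tstar ∈ Dt) (huv : ustar + vstar ∈ Dz)
    (hu : ∀ i, 0 ≤ ustar i) (hv : ∀ i, 0 ≤ vstar i)
    (hcompl : ∀ i, ustar i * vstar i = 0)
    (hfeasE : cE (tstar, ustar + vstar) = 0)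
    (hfeasI : ∀ j, 0 ≤ cI (tstar, ustar + vstar) j)
    (hfeasZ : cZ (tstar, ustar + vstar) = ustar - vstar)
    (hmin : IsLocalMinOn
      (fun q : (Fin n → ℝ) × (Fin s → ℝ) × (Fin s → ℝ) => f q.1)
      {q | q.1 ∈ Dt ∧ q.2.1 + q.2.2 ∈ Dz ∧ (∀ i, 0 ≤ q.2.1 i) ∧ (∀ i, 0 ≤ q.2.2 i) ∧
        (∀ i, q.2.1 i * q.2.2 i = 0) ∧ cE (q.1, q.2.1 + q.2.2) = 0 ∧
        (∀ j, 0 ≤ cI (q.1, q.2.1 + q.2.2) j) ∧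
        cZ (q.1, q.2.1 + q.2.2) = q.2.1 - q.2.2}
      (tstar, ustar, vstar))
    (hLICQ :
      (Matrix.fromRows
        (Matrix.fromCols (jac1 cE (tstar, ustar + vstar))
          (Matrix.fromCols
            (jac2 cE (tstar, ustar + vstar) * (sel fun i => 0 < ustar i)ᵀ)
            (jac2 cE (tstar, ustar + vstar) * (sel fun i => 0 < vstar i)ᵀ)))
        (Matrix.fromRows
          (Matrix.fromCols
            (sel (fun j => cI (tstar, ustar + vstar) j = 0) * jac1 cI (tstar, ustar + vstar))
            (Matrix.fromCols
              (sel (fun j => cI (tstar, ustar + vstar) j = 0) *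
                jac2 cI (tstar, ustar + vstar) * (sel fun i => 0 < ustar i)ᵀ)
              (sel (fun j => cI (tstar, ustar + vstar) j = 0) *
                jac2 cI (tstar, ustar + vstar) * (sel fun i => 0 < vstar i)ᵀ)))
          (Matrix.fromCols (jac1 cZ (tstar, ustar + vstar))
            (Matrix.fromCols
              ((jac2 cZ (tstar, ustar + vstar) - 1) * (sel fun i => 0 < ustar i)ᵀ)
              ((jac2 cZ (tstar, ustar + vstar) + 1) * (sel fun i => 0 < vstar i)ᵀ))))).rank
      = m₁ + Fintype.card {j // cI (tstar, ustar + vstar) j = 0} + s) :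
    ∃ (lE : Fin m₁ → ℝ) (lI : Fin m₂ → ℝ) (lZ : Fin s → ℝ) (μu μv : Fin s → ℝ),
      (fun j => fderiv ℝ f tstar (Pi.single j 1)) +
        (jac1 cE (tstar, ustar + vstar))ᵀ *ᵥ lE -
        (jac1 cI (tstar, ustar + vstar))ᵀ *ᵥ lI +
        (jac1 cZ (tstar, ustar + vstar))ᵀ *ᵥ lZ = 0 ∧
      (jac2 cE (tstar, ustar + vstar))ᵀ *ᵥ lE -
        (jac2 cI (tstar, ustar + vstar))ᵀ *ᵥ lI +
        (jac2 cZ (tstar, ustar + vstar) - 1)ᵀ *ᵥ lZ - μu = 0 ∧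
      (jac2 cE (tstar, ustar + vstar))ᵀ *ᵥ lE -
        (jac2 cI (tstar, ustar + vstar))ᵀ *ᵥ lI +
        (jac2 cZ (tstar, ustar + vstar) + 1)ᵀ *ᵥ lZ - μv = 0 ∧
      (∀ i, ustar i = 0 ∧ vstar i = 0 → 0 ≤ μu i ∧ 0 ≤ μv i) ∧
      (∀ i, 0 < ustar i → μu i = 0) ∧
      (∀ i, 0 < vstar i → μv i = 0) ∧
      (∀ j, 0 ≤ lI j) ∧
      lI ⬝ᵥ cI (tstar, ustar + vstar) = 0 := by
  have hp : Dt ×ˢ Dz ∈ 𝓝 (tstar, ustar + vstar) := (hDt.prod hDz).mem_nhds ⟨ht, huv⟩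
  have hE := (hcE.contDiffAt hp).hasStrictFDerivAt one_ne_zero
  have hI := (hcI.contDiffAt hp).hasStrictFDerivAt one_ne_zero
  have hZ := (hcZ.contDiffAt hp).hasStrictFDerivAt one_ne_zero
  have hF : HasStrictFDerivAt (fun q : (Fin n → ℝ) × (Fin s → ℝ) × (Fin s → ℝ) => f q.1)
      ((fderiv ℝ f tstar).comp (ContinuousLinearMap.fst ℝ _ _)) (tstar, ustar, vstar) :=
    ((hf.contDiffAt (hDt.mem_nhds ht)).hasStrictFDerivAt one_ne_zero).comp _ hasStrictFDerivAt_fst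
  obtain ⟨ℓ, hℓ, hsign⟩ := exists_multipliers_of_isLocalMinOn_orthantFace hF
    (hasStrictFDerivAt_tnlpConstr _ _ _ hE hI hZ) (tnlpDeriv_surjective hLICQ)
    (tnlpConstr_eq_zero hu hv hfeasE hfeasZ) fun b => hmin.filter_mono <| nhdsWithin_le_of_mem <|
      mpccFeasible_mem_nhdsWithin_branch hDt hDz ht huv hcompl hfeasI
        (hcI.continuousOn.continuousAt hp) b
  exact isSStationary_of_multipliers ℓ hℓ (fun j => hsign true _ trivial)
    (fun i hi => hsign true (.inr (.inl i)) ⟨rfl, hi⟩)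
    (fun i hi => hsign false (.inr (.inr i)) ⟨rfl, hi⟩)

/-- First order necessary optimality conditions (S-stationarity) for the counterpart
MPCC under MPCC-LICQ. -/
theorem stmt11 {n s m₁ m₂ : ℕ}
    (Dt : Set (Fin n → ℝ)) (Dz : Set (Fin s → ℝ))
    (hDt : IsOpen Dt) (hDz : IsOpen Dz)
    (hsym : ∀ z ∈ Dz, ∀ σ : Fin s → ℝ, (∀ i, σ i = -1 ∨ σ i = 0 ∨ σ i = 1) →
      (fun i => σ i * z i) ∈ Dz)
    (f : (Fin n → ℝ) → ℝ)
    (cE : (Fin n → ℝ) × (Fin s → ℝ) → Fin m₁ → ℝ)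
    (cI : (Fin n → ℝ) × (Fin s → ℝ) → Fin m₂ → ℝ)
    (cZ : (Fin n → ℝ) × (Fin s → ℝ) → Fin s → ℝ)
    (hf : ContDiffOn ℝ 1 f Dt)
    (hcE : ContDiffOn ℝ 1 cE (Dt ×ˢ Dz))
    (hcI : ContDiffOn ℝ 1 cI (Dt ×ˢ Dz))
    (hcZ : ContDiffOn ℝ 1 cZ (Dt ×ˢ Dz))
    (tstar : Fin n → ℝ) (ustar vstar : Fin s → ℝ)
    (ht : tstar ∈ Dt) (huv : ustar + vstar ∈ Dz)
    (hu : ∀ i, 0 ≤ ustar i) (hv : ∀ i, 0 ≤ vstar i)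
    (hcompl : ∀ i, ustar i * vstar i = 0)
    (hfeasE : cE (tstar, ustar + vstar) = 0)
    (hfeasI : ∀ j, 0 ≤ cI (tstar, ustar + vstar) j)
    (hfeasZ : cZ (tstar, ustar + vstar) = ustar - vstar)
    (hmin : IsLocalMinOn
      (fun q : (Fin n → ℝ) × (Fin s → ℝ) × (Fin s → ℝ) => f q.1)
      {q | q.1 ∈ Dt ∧ q.2.1 + q.2.2 ∈ Dz ∧ (∀ i, 0 ≤ q.2.1 i) ∧ (∀ i, 0 ≤ q.2.2 i) ∧
        (∀ i, q.2.1 i * q.2.2 i = 0) ∧ cE (q.1, q.2.1 + q.2.2) = 0 ∧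
        (∀ j, 0 ≤ cI (q.1, q.2.1 + q.2.2) j) ∧
        cZ (q.1, q.2.1 + q.2.2) = q.2.1 - q.2.2}
      (tstar, ustar, vstar))
    (hLICQ :
      (Matrix.fromRows
        (Matrix.fromCols (jac1 cE (tstar, ustar + vstar))
          (Matrix.fromCols
            (jac2 cE (tstar, ustar + vstar) * (sel fun i => 0 < ustar i)ᵀ)
            (jac2 cE (tstar, ustar + vstar) * (sel fun i => 0 < vstar i)ᵀ)))
        (Matrix.fromRows
          (Matrix.fromCols
            (sel (fun j => cI (tstar, ustar + vstar) j = 0) * jac1 cI (tstar, ustar + vstar))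
            (Matrix.fromCols
              (sel (fun j => cI (tstar, ustar + vstar) j = 0) *
                jac2 cI (tstar, ustar + vstar) * (sel fun i => 0 < ustar i)ᵀ)
              (sel (fun j => cI (tstar, ustar + vstar) j = 0) *
                jac2 cI (tstar, ustar + vstar) * (sel fun i => 0 < vstar i)ᵀ)))
          (Matrix.fromCols (jac1 cZ (tstar, ustar + vstar))
            (Matrix.fromCols
              ((jac2 cZ (tstar, ustar + vstar) - 1) * (sel fun i => 0 < ustar i)ᵀ)
              ((jac2 cZ (tstar, ustar + vstar) + 1) * (sel fun i => 0 < vstar i)ᵀ))))).rank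
      = m₁ + Fintype.card {j // cI (tstar, ustar + vstar) j = 0} + s) :
    ∃ (lE : Fin m₁ → ℝ) (lI : Fin m₂ → ℝ) (lZ : Fin s → ℝ) (μu μv : Fin s → ℝ),
      (fun j => fderiv ℝ f tstar (Pi.single j 1)) +
        (jac1 cE (tstar, ustar + vstar))ᵀ *ᵥ lE -
        (jac1 cI (tstar, ustar + vstar))ᵀ *ᵥ lI +
        (jac1 cZ (tstar, ustar + vstar))ᵀ *ᵥ lZ = 0 ∧
      (jac2 cE (tstar, ustar + vstar))ᵀ *ᵥ lE -
        (jac2 cI (tstar, ustar + vstar))ᵀ *ᵥ lI +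
        (jac2 cZ (tstar, ustar + vstar) - 1)ᵀ *ᵥ lZ - μu = 0 ∧
      (jac2 cE (tstar, ustar + vstar))ᵀ *ᵥ lE -
        (jac2 cI (tstar, ustar + vstar))ᵀ *ᵥ lI +
        (jac2 cZ (tstar, ustar + vstar) + 1)ᵀ *ᵥ lZ - μv = 0 ∧
      (∀ i, ustar i = 0 ∧ vstar i = 0 → 0 ≤ μu i ∧ 0 ≤ μv i) ∧
      (∀ i, 0 < ustar i → μu i = 0) ∧
      (∀ i, 0 < vstar i → μv i = 0) ∧
      (∀ j, 0 ≤ lI j) ∧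
      lI ⬝ᵥ cI (tstar, ustar + vstar) = 0 :=
  stmt11_general Dt Dz hDt hDz f cE cI cZ hf hcE hcI hcZ tstar ustar vstar ht huv hu hv hcompl
    hfeasE hfeasI hfeasZ hmin hLICQ
end
end
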